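/- arXiv:2506.07757 — 4 statements merged into one kernel-verified Lean document; each statement's English description precedes it below -/
import Mathlib

section
/- Let M be a nilpotent simple matroid of rank at most 3 on [d], and let w = (p_1,…,p_d) be an ordering of [d] such that w_i ≤ 1 for every i, where w_i is the degree of p_i in the restriction M|{p_1,…,p_i}. Let γ = (γ_1,…,γ_d) ∈ V_{C(M)} be such that γ_i ≠ 0 for all i and γ_i, γ_j are linearly independent for all i ≠ j (no loops and no coinciding points), and let q ∈ ℂ³ satisfy q ∉ span{γ_i, γ_j} for all i, j ∈ [d] (q is in general position with respect to γ). Then the set Lift_{M,q}(γ) = { z = (z_1,…,z_d) ∈ ℂ^d : (γ_1 + z_1 q, …, γ_d + z_d q) ∈ V_{C(M)} } is the underlying set of a ℂ-linear subspace of ℂ^d of dimension d − Σ_{i=1}^d w_i. -/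
/-- A point-line "pre-matroid": a ground set together with an independence predicate.
The matroid axioms are stated separately as `PLM.IsMatroid`. -/
structure PLM (α : Type) where
  E : Set α
  Indep : Set α → Prop

namespace PLM

variable {α : Type}

/-- The matroid axioms: finite ground set, the empty set is independent, independent sets
are contained in the ground set, hereditary property, and the exchange property. -/
def IsMatroid (M : PLM α) : Prop :=
  M.E.Finite ∧ M.Indep ∅ ∧ (∀ I, M.Indep I → I ⊆ M.E) ∧
    (∀ I J, M.Indep J → I ⊆ J → M.Indep I) ∧
    (∀ I J, M.Indep I → M.Indep J → I.ncard < J.ncard → ∃ e ∈ J \ I, M.Indep (insert e I))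

/-- A matroid is simple if every subset of the ground set of size at most 2 is independent. -/
def Simple (M : PLM α) : Prop := ∀ S ⊆ M.E, S.ncard ≤ 2 → M.Indep S

/-- Rank at most three: every independent set has at most 3 elements. -/
def RankLE3 (M : PLM α) : Prop := ∀ I, M.Indep I → I.ncard ≤ 3

/-- Rank exactly three. -/
def RankEq3 (M : PLM α) : Prop := M.RankLE3 ∧ ∃ I, M.Indep I ∧ I.ncard = 3

/-- The property of being a dependent subset of the ground set all of whose
3-element subsets are dependent. -/
def LinePre (M : PLM α) (l : Set α) : Prop :=
  l ⊆ M.E ∧ ¬ M.Indep l ∧ ∀ t ⊆ l, t.ncard = 3 → ¬ M.Indep t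

/-- A line: a maximal dependent subset of the ground set in which every
3-element subset is dependent. -/
def IsLine (M : PLM α) (l : Set α) : Prop :=
  M.LinePre l ∧ ∀ l', M.LinePre l' → l ⊆ l' → l' = l

/-- The degree of a point: the number of lines containing it. -/
noncomputable def degree (M : PLM α) (p : α) : ℕ :=
  {l : Set α | M.IsLine l ∧ p ∈ l}.ncard

/-- Restriction of `M` to a subset `X` of the ground set. -/
def restrict (M : PLM α) (X : Set α) : PLM α :=
  ⟨M.E ∩ X, fun I => M.Indep I ∧ I ⊆ X⟩

/-- The matroid `M(J)` obtained from `M` by turning every point of `J` into a loop: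
a set is independent iff it is an independent set of `M` contained in `E \ J`. -/
def loopify (M : PLM α) (J : Set α) : PLM α :=
  ⟨M.E, fun I => M.Indep I ∧ I ⊆ M.E \ J⟩

/-- One step of the nilpotency chain: restrict to the set `S_M` of points of degree at least 2. -/
noncomputable def Sstep (M : PLM α) : PLM α :=
  M.restrict {p ∈ M.E | 2 ≤ M.degree p}

/-- `M` is nilpotent if iterating `Sstep` eventually reaches the empty ground set. -/
def Nilpotent (M : PLM α) : Prop := ∃ n : ℕ, (PLM.Sstep^[n] M).E = (∅ : Set α)

/-- `Q_M`: the set of points of degree at least 3. -/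
def Qset (M : PLM α) : Set α := {p ∈ M.E | 3 ≤ M.degree p}

/-- A circuit: a minimal dependent subset of the ground set. -/
def Circuit (M : PLM α) (C : Set α) : Prop :=
  C ⊆ M.E ∧ ¬ M.Indep C ∧ ∀ C', C' ⊂ C → M.Indep C'

end PLM

/-! Realization spaces for matroids on `Fin d`, with configurations in `ℂ^{3d}`. -/

/-- A point of `ℂ^{3d}`, viewed as `d` vectors in `ℂ³`. -/
abbrev Config (d : ℕ) := Fin d × Fin 3 → ℂ

/-- The `i`-th vector of a configuration. -/
def cvec {d : ℕ} (γ : Config d) (i : Fin d) : Fin 3 → ℂ := fun j => γ (i, j)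

/-- The family of vectors indexed by `S` is linearly dependent. -/
def LinDep {d : ℕ} (γ : Config d) (S : Set (Fin d)) : Prop :=
  ¬ LinearIndependent ℂ (fun i : S => cvec γ i)

/-- The realization space `Γ_M ⊆ ℂ^{3d}`: tuples such that a subset of the ground set is
dependent iff the corresponding vectors are linearly dependent. -/
def realizationSpace {d : ℕ} (M : PLM (Fin d)) : Set (Config d) :=
  {γ | ∀ S ⊆ M.E, (¬ M.Indep S ↔ LinDep γ S)}

/-- The circuit variety `V_{C(M)}`: tuples whose vectors satisfy all dependencies of `M`. -/
def circuitVariety {d : ℕ} (M : PLM (Fin d)) : Set (Config d) :=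
  {γ | ∀ S ⊆ M.E, ¬ M.Indep S → LinDep γ S}

/-- The matroid variety `V_M`: the Zariski closure of the realization space, i.e. the zero
locus of the vanishing ideal of `Γ_M` in the polynomial ring in `3d` variables. -/
noncomputable def matroidVariety {d : ℕ} (M : PLM (Fin d)) : Set (Config d) :=
  MvPolynomial.zeroLocus ℂ (MvPolynomial.vanishingIdeal ℂ (realizationSpace M))

/-!
For a dependent triple `{i, j, k}` of `M`, multilinearity of the determinant shows that the
lifted vectors `γ_i + z_i q, γ_j + z_j q, γ_k + z_k q` are dependent iff a linear form in
`(z_i, z_j, z_k)` vanishes: the terms containing `q` twice cancel and `det (γ_i, γ_j, γ_k) = 0`.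
As `M` is simple and any four vectors of `ℂ³` are dependent, the lift space is the common kernel
of these forms. Adding the points in the given order, a point of degree `0` brings no new
condition. A point `x` of degree `1` lies on a unique line, through two earlier points `a, b`;
the lift of every point of that line is then forced into the plane spanned by the lifts of `a`
and `b`, so the single form of `{a, b, x}` accounts for all new conditions, and it is nonzero on
the `x`-th coordinate vector because `q ∉ span (γ_a, γ_b)`.
-/

open Module Submodule

section LinearAlgebra

variable {K V : Type*} [Field K] [AddCommGroup V] [Module K V]

theorem LinearIndependent.pair_add_smul {q u v : V} (h : LinearIndependent K ![q, u, v])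
    (x y : K) : LinearIndependent K ![u + x • q, v + y • q] := by
  rw [LinearIndependent.pair_iff]
  intro s t hst
  have := Fintype.linearIndependent_iff.mp h ![s * x + t * y, s, t] (by
    simp only [Fin.sum_univ_three, Matrix.cons_val]
    rw [← hst]
    module)
  exact ⟨this 1, this 2⟩

theorem mem_span_pair_of_not_linearIndependent {u v w : V} (huv : LinearIndependent K ![u, v])
    (h : ¬ LinearIndependent K ![u, v, w]) : w ∈ span K {u, v} := by
  by_contra hw
  refine h ?_
  convert huv.finSnoc (x := w) (by simpa [Matrix.range_cons, Set.pair_comm] using hw) using 1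
  ext i; fin_cases i <;> rfl

theorem not_linearIndependent_of_mem_span_pair {u v a b c : V} (ha : a ∈ span K {u, v})
    (hb : b ∈ span K {u, v}) (hc : c ∈ span K {u, v}) : ¬ LinearIndependent K ![a, b, c] := by
  classical
  intro h
  have hle : span K (Set.range ![a, b, c]) ≤ span K (({u, v} : Finset V) : Set V) := by
    rw [span_le, Finset.coe_pair]
    simp [Matrix.range_cons, Set.insert_subset_iff, ha, hb, hc]
  have := (finrank_mono hle).trans (finrank_span_finset_le_card _)
  rw [finrank_span_eq_card h, Fintype.card_fin] at this
  have := Finset.card_le_two (a := u) (b := v)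
  omega

theorem linearIndepOn_triple_iff {ι : Type*} {f : ι → V} {i j k : ι} (hij : i ≠ j)
    (hik : i ≠ k) (hjk : j ≠ k) :
    LinearIndepOn K f {i, j, k} ↔ LinearIndependent K ![f i, f j, f k] := by
  have hinj : Function.Injective ![i, j, k] := by
    intro a b
    fin_cases a <;> fin_cases b <;> simp [hij, hik, hjk, hij.symm, hik.symm, hjk.symm]
  have hrange : Set.range ![i, j, k] = {i, j, k} := by
    simp only [Matrix.range_cons, Matrix.range_empty, Set.union_empty, Set.singleton_union]
  have hcomp : f ∘ ![i, j, k] = ![f i, f j, f k] := by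
    ext x; fin_cases x <;> rfl
  rw [← hrange, linearIndepOn_range_iff hinj, hcomp]

theorem LinearIndependent.linearIndepOn_triple {ι : Type*} {f : ι → V} {i j k : ι}
    (h : LinearIndependent K ![f i, f j, f k]) : LinearIndepOn K f {i, j, k} := by
  have hinj : Function.Injective ![i, j, k] := Function.Injective.of_comp (f := f) <| by
    convert h.injective using 1
    ext x; fin_cases x <;> rfl
  exact (linearIndepOn_triple_iff (hinj.ne (a₁ := 0) (a₂ := 1) (by decide))
    (hinj.ne (a₁ := 0) (a₂ := 2) (by decide)) (hinj.ne (a₁ := 1) (a₂ := 2) (by decide))).mpr h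

theorem finrank_inf_ker_add_one [FiniteDimensional K V] {W : Submodule K V} {f : V →ₗ[K] K}
    {v : V} (hv : v ∈ W) (hfv : f v ≠ 0) :
    finrank K ↥(W ⊓ LinearMap.ker f) + 1 = finrank K W := by
  have hf : f.domRestrict W ≠ 0 := fun h => hfv (by simpa using LinearMap.congr_fun h ⟨v, hv⟩)
  rw [← Module.Dual.finrank_ker_add_one_of_ne_zero hf, LinearMap.ker_domRestrict,
    ← finrank_map_subtype_eq, map_comap_subtype]

end LinearAlgebra

section Det3

variable {K : Type*} [Field K]

def det3 (u v w : Fin 3 → K) : K := (Matrix.of ![u, v, w]).det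

theorem linearIndependent_iff_det3_ne_zero {u v w : Fin 3 → K} :
    LinearIndependent K ![u, v, w] ↔ det3 u v w ≠ 0 := by
  rw [det3, ← isUnit_iff_ne_zero, ← Matrix.isUnit_iff_isUnit_det,
    ← Matrix.linearIndependent_rows_iff_isUnit]
  rfl

theorem det3_rotate (u v w : Fin 3 → K) : det3 u v w = det3 v w u := by
  simp only [det3, Matrix.det_fin_three, Matrix.of_apply, Matrix.cons_val]
  ring

theorem det3_add_smul (u v w q : Fin 3 → K) (x y t : K) :
    det3 (u + x • q) (v + y • q) (w + t • q) =
      det3 u v w + x * det3 q v w + y * det3 u q w + t * det3 u v q := by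
  simp only [det3, Matrix.det_fin_three, Matrix.of_apply, Matrix.cons_val, Pi.add_apply,
    Pi.smul_apply, smul_eq_mul]
  ring

end Det3

namespace PLM

variable {α : Type} {M : PLM α} {X L t : Set α} {x i j k : α}

theorem Simple.restrict (hs : M.Simple) (X : Set α) : (M.restrict X).Simple :=
  fun S hS h2 => ⟨hs S (hS.trans Set.inter_subset_left) h2, hS.trans Set.inter_subset_right⟩

theorem IsLine.three_le_ncard (hs : M.Simple) (hL : M.IsLine L) : 3 ≤ L.ncard := by
  by_contra! h
  exact hL.1.2.1 (hs L hL.1.1 (by omega))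

theorem IsLine.subset_of_restrict (hL : (M.restrict X).IsLine L) : L ⊆ X :=
  fun _ h => (hL.1.1 h).2

theorem IsLine.not_indep_of_restrict (hL : (M.restrict X).IsLine L) (ht : t ⊆ L)
    (ht3 : t.ncard = 3) : ¬ M.Indep t :=
  fun h => hL.1.2.2 t ht ht3 ⟨h, ht.trans hL.subset_of_restrict⟩

theorem LinePre.exists_isLine_superset [Finite α] (h : M.LinePre t) :
    ∃ L, M.IsLine L ∧ t ⊆ L := by
  obtain ⟨L, ⟨hL, htL⟩, hmax⟩ := Set.Finite.exists_maximalFor Set.ncard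
    {l | M.LinePre l ∧ t ⊆ l} (Set.toFinite _) ⟨t, h, subset_rfl⟩
  refine ⟨L, ⟨hL, fun l hl hLl => ?_⟩, htL⟩
  exact (Set.eq_of_subset_of_ncard_le hLl
    (hmax ⟨hl, htL.trans hLl⟩ (Set.ncard_le_ncard hLl)) (Set.toFinite _)).symm

theorem linePre_restrict_of_ncard_le_three [Finite α] (htX : t ⊆ X) (htE : t ⊆ M.E)
    (hdep : ¬ M.Indep t) (ht : t.ncard ≤ 3) : (M.restrict X).LinePre t := by
  refine ⟨fun _ h => ⟨htE h, htX h⟩, fun h => hdep h.1, fun s hs hs3 => ?_⟩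
  rw [Set.eq_of_subset_of_ncard_le hs (by omega) (Set.toFinite _)]
  exact fun h => hdep h.1

theorem exists_isLine_restrict_superset_triple [Finite α] (hX : {i, j, k} ⊆ X)
    (hE : {i, j, k} ⊆ M.E) (hdep : ¬ M.Indep {i, j, k}) :
    ∃ L, (M.restrict X).IsLine L ∧ {i, j, k} ⊆ L := by
  classical
  refine (linePre_restrict_of_ncard_le_three hX hE hdep ?_).exists_isLine_superset
  rw [← Finset.coe_pair, ← Finset.coe_insert, Set.ncard_coe_finset]
  exact Finset.card_le_three

theorem notMem_of_isLine_of_degree_eq_zero [Finite α] (h : M.degree x = 0) (hL : M.IsLine L) :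
    x ∉ L := fun hx =>
  ((Set.ncard_eq_zero (Set.toFinite _)).mp h).subset ⟨hL, hx⟩

theorem exists_unique_isLine_of_degree_eq_one (h : M.degree x = 1) :
    ∃ L, M.IsLine L ∧ x ∈ L ∧ ∀ L', M.IsLine L' → x ∈ L' → L' = L := by
  obtain ⟨L, hL⟩ := Set.ncard_eq_one.mp h
  have hmem : ∀ L', L' ∈ {l | M.IsLine l ∧ x ∈ l} ↔ L' = L := fun L' => by rw [hL]; rfl
  exact ⟨L, ((hmem L).mpr rfl).1, ((hmem L).mpr rfl).2, fun L' h1 h2 => (hmem L').mp ⟨h1, h2⟩⟩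

end PLM

theorem mem_circuitVariety_iff {d : ℕ} {M : PLM (Fin d)} (hE : M.E = Set.univ) (hs : M.Simple)
    {v : Fin d → Fin 3 → ℂ} : (fun pr : Fin d × Fin 3 => v pr.1 pr.2) ∈ circuitVariety M ↔
      ∀ i j k, ¬ M.Indep {i, j, k} → ¬ LinearIndependent ℂ ![v i, v j, v k] := by
  refine ⟨fun h i j k hdep hli => h _ (hE ▸ Set.subset_univ _) hdep hli.linearIndepOn_triple,
    fun h S _ hdep hli => ?_⟩
  classical
  have hS3 : S.ncard = 3 := by
    refine le_antisymm ?_ (not_lt.mp fun hS => hdep (hs S (hE ▸ Set.subset_univ _) (by omega)))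
    rw [Set.ncard_eq_toFinset_card', Set.toFinset_card]
    simpa using hli.fintype_card_le_finrank
  obtain ⟨i, j, k, hij, hik, hjk, rfl⟩ := Set.ncard_eq_three.mp hS3
  exact h i j k hdep ((linearIndepOn_triple_iff hij hik hjk).mp hli)

section Lift

variable {K : Type*} [Field K] {ι : Type}

def liftForm (γ : ι → Fin 3 → K) (q : Fin 3 → K) (i j k : ι) : (ι → K) →ₗ[K] K :=
  det3 q (γ j) (γ k) • LinearMap.proj i + det3 (γ i) q (γ k) • LinearMap.proj j +
    det3 (γ i) (γ j) q • LinearMap.proj k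

theorem liftForm_apply (γ : ι → Fin 3 → K) (q : Fin 3 → K) (i j k : ι) (z : ι → K) :
    liftForm γ q i j k z =
      det3 (γ i + z i • q) (γ j + z j • q) (γ k + z k • q) - det3 (γ i) (γ j) (γ k) := by
  rw [det3_add_smul]
  simp only [liftForm, LinearMap.add_apply, LinearMap.smul_apply, LinearMap.coe_proj,
    Function.eval, smul_eq_mul]
  ring

theorem liftForm_eq_zero_iff {γ : ι → Fin 3 → K} {q : Fin 3 → K} {i j k : ι} {z : ι → K}
    (h : ¬ LinearIndependent K ![γ i, γ j, γ k]) :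
    liftForm γ q i j k z = 0 ↔
      ¬ LinearIndependent K ![γ i + z i • q, γ j + z j • q, γ k + z k • q] := by
  rw [liftForm_apply, linearIndependent_iff_det3_ne_zero, not_not,
    not_not.mp (linearIndependent_iff_det3_ne_zero.not.mp h), sub_zero]

def liftSpace (M : PLM ι) (γ : ι → Fin 3 → K) (q : Fin 3 → K) (X : Set ι) :
    Submodule K (ι → K) :=
  ⨅ (i) (j) (k) (_ : {i, j, k} ⊆ X ∧ ¬ M.Indep {i, j, k}), LinearMap.ker (liftForm γ q i j k)

variable {M : PLM ι} {γ : ι → Fin 3 → K} {q : Fin 3 → K} {X : Set ι} {x : ι} {z : ι → K}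

theorem mem_liftSpace : z ∈ liftSpace M γ q X ↔
    ∀ i j k, {i, j, k} ⊆ X → ¬ M.Indep {i, j, k} → liftForm γ q i j k z = 0 := by
  simp [liftSpace, mem_iInf]

theorem mem_liftSpace_iff_not_linearIndependent
    (hγ : ∀ i j k, ¬ M.Indep {i, j, k} → ¬ LinearIndependent K ![γ i, γ j, γ k]) :
    z ∈ liftSpace M γ q X ↔ ∀ i j k, {i, j, k} ⊆ X → ¬ M.Indep {i, j, k} →
      ¬ LinearIndependent K ![γ i + z i • q, γ j + z j • q, γ k + z k • q] := by
  rw [mem_liftSpace]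
  exact forall₃_congr fun i j k => forall_congr' fun _ => forall_congr' fun hdep =>
    liftForm_eq_zero_iff (hγ i j k hdep)

theorem liftSpace_anti {X Y : Set ι} (h : X ⊆ Y) : liftSpace M γ q Y ≤ liftSpace M γ q X :=
  fun _ hz => mem_liftSpace.mpr fun i j k hX => mem_liftSpace.mp hz i j k (hX.trans h)

theorem liftSpace_empty : liftSpace M γ q ∅ = ⊤ :=
  eq_top_iff.mpr fun _ _ => mem_liftSpace.mpr fun i _ _ hX =>
    absurd (hX (Set.mem_insert i _)) (Set.notMem_empty i)

theorem single_mem_liftSpace [DecidableEq ι] (hx : x ∉ X) :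
    Pi.single x 1 ∈ liftSpace M γ q X := by
  refine mem_liftSpace.mpr fun i j k hX _ => ?_
  have hne : ∀ y ∈ ({i, j, k} : Set ι), y ≠ x := fun y hy h => hx (h ▸ hX hy)
  simp [liftForm, hne i (by simp), hne j (by simp), hne k (by simp)]

theorem liftSpace_insert_of_degree_eq_zero [Finite ι] (hXE : insert x X ⊆ M.E)
    (h0 : (M.restrict (insert x X)).degree x = 0) :
    liftSpace M γ q (insert x X) = liftSpace M γ q X := by
  refine le_antisymm (liftSpace_anti (Set.subset_insert x X)) fun z hz =>
    mem_liftSpace.mpr fun i j k hX hdep => ?_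
  have hx : x ∉ ({i, j, k} : Set ι) := fun hx => by
    obtain ⟨L, hL, htL⟩ := PLM.exists_isLine_restrict_superset_triple hX (hX.trans hXE) hdep
    exact PLM.notMem_of_isLine_of_degree_eq_zero h0 hL (htL hx)
  exact mem_liftSpace.mp hz i j k ((Set.subset_insert_iff_of_notMem hx).mp hX) hdep

theorem liftSpace_insert_eq_inf_ker [Finite ι] {L : Set ι} {a b : ι} (hXE : insert x X ⊆ M.E)
    (hγ : ∀ i j k, ¬ M.Indep {i, j, k} → ¬ LinearIndependent K ![γ i, γ j, γ k])
    (hqab : LinearIndependent K ![q, γ a, γ b]) (hL : (M.restrict (insert x X)).IsLine L)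
    (hxL : x ∈ L) (huniq : ∀ L', (M.restrict (insert x X)).IsLine L' → x ∈ L' → L' = L)
    (haL : a ∈ L) (hbL : b ∈ L) (hab : a ≠ b) (hax : a ≠ x) (hbx : b ≠ x) :
    liftSpace M γ q (insert x X) = liftSpace M γ q X ⊓ LinearMap.ker (liftForm γ q a b x) := by
  have hLX := hL.subset_of_restrict
  have hmemX : ∀ y ∈ L, y ≠ x → y ∈ X := fun y hy hyx => (hLX hy).resolve_left hyx
  have hdep : ∀ y ∈ L, a ≠ y → b ≠ y → ¬ M.Indep {a, b, y} := fun y hy hay hby =>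
    hL.not_indep_of_restrict (by simp [Set.insert_subset_iff, haL, hbL, hy])
      (Set.ncard_eq_three.mpr ⟨a, b, y, hab, hay, hby, rfl⟩)
  refine le_antisymm (le_inf (liftSpace_anti (Set.subset_insert x X)) fun z hz =>
    mem_liftSpace.mp hz a b x (by simp [Set.insert_subset_iff, hLX haL, hLX hbL])
      (hdep x hxL hax hbx)) ?_
  rintro z ⟨hz, hzx⟩
  have hspan : ∀ y ∈ L, γ y + z y • q ∈ span K {γ a + z a • q, γ b + z b • q} := by
    intro y hy
    by_cases hay : a = y
    · exact subset_span (by simp [hay])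
    by_cases hby : b = y
    · exact subset_span (by simp [hby])
    refine mem_span_pair_of_not_linearIndependent (hqab.pair_add_smul _ _) ?_
    by_cases hyx : y = x
    · rw [hyx] at hay hby ⊢
      exact (liftForm_eq_zero_iff (hγ a b x (hdep x hxL hay hby))).mp (LinearMap.mem_ker.mp hzx)
    · exact (mem_liftSpace_iff_not_linearIndependent hγ).mp hz a b y
        (by simp [Set.insert_subset_iff, hmemX a haL hax, hmemX b hbL hbx, hmemX y hy hyx])
        (hdep y hy hay hby)
  refine (mem_liftSpace_iff_not_linearIndependent hγ).mpr fun i j k hX hdep => ?_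
  by_cases hx : x ∈ ({i, j, k} : Set ι)
  · obtain ⟨L', hL', hsub⟩ := PLM.exists_isLine_restrict_superset_triple hX (hX.trans hXE) hdep
    rw [huniq L' hL' (hsub hx)] at hsub
    exact not_linearIndependent_of_mem_span_pair (hspan i (hsub (by simp)))
      (hspan j (hsub (by simp))) (hspan k (hsub (by simp)))
  · exact (mem_liftSpace_iff_not_linearIndependent hγ).mp hz i j k
      ((Set.subset_insert_iff_of_notMem hx).mp hX) hdep

theorem finrank_liftSpace_insert_of_degree_eq_one [Finite ι] (hs : M.Simple)
    (hXE : insert x X ⊆ M.E)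
    (hγ : ∀ i j k, ¬ M.Indep {i, j, k} → ¬ LinearIndependent K ![γ i, γ j, γ k])
    (hq : ∀ i j, i ≠ j → LinearIndependent K ![q, γ i, γ j]) (hx : x ∉ X)
    (h1 : (M.restrict (insert x X)).degree x = 1) :
    finrank K (liftSpace M γ q (insert x X)) + 1 = finrank K (liftSpace M γ q X) := by
  classical
  obtain ⟨L, hL, hxL, huniq⟩ := PLM.exists_unique_isLine_of_degree_eq_one h1
  have h2 : 1 < (L \ {x}).ncard := by
    have := hL.three_le_ncard (hs.restrict _)
    rw [Set.ncard_sdiff_singleton_of_mem hxL]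
    omega
  obtain ⟨a, ⟨haL, hax⟩, b, ⟨hbL, hbx⟩, hab⟩ := (Set.one_lt_ncard (Set.toFinite _)).mp h2
  rw [Set.mem_singleton_iff] at hax hbx
  rw [liftSpace_insert_eq_inf_ker hXE hγ (hq a b hab) hL hxL huniq haL hbL hab hax hbx]
  refine finrank_inf_ker_add_one (single_mem_liftSpace hx) ?_
  simpa [liftForm, Pi.single_apply, hax, hbx, ← det3_rotate] using
    linearIndependent_iff_det3_ne_zero.mp (hq a b hab)

theorem finrank_liftSpace_insert_add_degree [Finite ι] (hs : M.Simple) (hXE : insert x X ⊆ M.E)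
    (hγ : ∀ i j k, ¬ M.Indep {i, j, k} → ¬ LinearIndependent K ![γ i, γ j, γ k])
    (hq : ∀ i j, i ≠ j → LinearIndependent K ![q, γ i, γ j]) (hx : x ∉ X)
    (h1 : (M.restrict (insert x X)).degree x ≤ 1) :
    finrank K (liftSpace M γ q (insert x X)) + (M.restrict (insert x X)).degree x =
      finrank K (liftSpace M γ q X) := by
  rcases Nat.le_one_iff_eq_zero_or_eq_one.mp h1 with h | h
  · rw [liftSpace_insert_of_degree_eq_zero hXE h, h, add_zero]
  · rw [h]
    exact finrank_liftSpace_insert_of_degree_eq_one hs hXE hγ hq hx h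

theorem finrank_liftSpace_range_add_sum_degree [Fintype ι] (hs : M.Simple)
    (hγ : ∀ i j k, ¬ M.Indep {i, j, k} → ¬ LinearIndependent K ![γ i, γ j, γ k])
    (hq : ∀ i j, i ≠ j → LinearIndependent K ![q, γ i, γ j]) {n : ℕ} (p : Fin n → ι)
    (hp : Function.Injective p) (hpE : Set.range p ⊆ M.E)
    (h1 : ∀ j, (M.restrict (p '' Set.Iic j)).degree (p j) ≤ 1) :
    finrank K (liftSpace M γ q (Set.range p)) +
      ∑ j, (M.restrict (p '' Set.Iic j)).degree (p j) = Fintype.card ι := by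
  induction n with
  | zero =>
    rw [Set.range_eq_empty p, liftSpace_empty, finrank_top, Module.finrank_pi]
    simp
  | succ n ih =>
    have hdeg (j : Fin n) : (M.restrict (p '' Set.Iic j.castSucc)).degree (p j.castSucc) =
        (M.restrict (Fin.init p '' Set.Iic j)).degree (Fin.init p j) := by
      rw [← Fin.image_castSucc_Iic, ← Set.image_comp]
      rfl
    have hrange : Set.range p = insert (p (Fin.last n)) (Set.range (Fin.init p)) := by
      conv_lhs => rw [← Fin.snoc_init_self p]
      exact Fin.range_snoc _ _
    have hlast : p '' Set.Iic (Fin.last n) = Set.range p := by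
      rw [← Set.image_univ, Set.eq_univ_of_forall (s := Set.Iic (Fin.last n)) Fin.le_last]
    have hx : p (Fin.last n) ∉ Set.range (Fin.init p) :=
      fun ⟨j, hj⟩ => Fin.castSucc_ne_last j (hp hj)
    have ih' := ih (Fin.init p) (hp.comp (Fin.castSucc_injective n))
      ((Set.range_comp_subset_range _ _).trans hpE) fun j => hdeg j ▸ h1 j.castSucc
    have h1last := h1 (Fin.last n)
    rw [hlast, hrange] at h1last
    rw [hrange] at hpE
    have hstep := finrank_liftSpace_insert_add_degree hs hpE hγ hq hx h1last
    rw [Fin.sum_univ_castSucc, hlast, hrange]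
    simp only [hdeg]
    omega

end Lift

theorem lift_space_is_subspace_of_dimension_general (d : ℕ) (M : PLM (Fin d))
    (hE : M.E = Set.univ)
    (hs : M.Simple)
    (p : Fin d → Fin d) (hp : Function.Bijective p)
    (w : Fin d → ℕ)
    (hw : ∀ i : Fin d, w i = (M.restrict {x | ∃ j, j ≤ i ∧ p j = x}).degree (p i))
    (hw1 : ∀ i, w i ≤ 1)
    (γ : Fin d → Fin 3 → ℂ)
    (hγ : (fun pr : Fin d × Fin 3 => γ pr.1 pr.2) ∈ circuitVariety M)
    (hpair : ∀ i j : Fin d, i ≠ j → LinearIndependent ℂ ![γ i, γ j])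
    (q : Fin 3 → ℂ)
    (hq : ∀ i j : Fin d, q ∉ Submodule.span ℂ ({γ i, γ j} : Set (Fin 3 → ℂ))) :
    ∃ W : Submodule ℂ (Fin d → ℂ),
      (W : Set (Fin d → ℂ)) =
        {z : Fin d → ℂ |
          (fun pr : Fin d × Fin 3 => γ pr.1 pr.2 + z pr.1 * q pr.2) ∈ circuitVariety M} ∧
      Module.finrank ℂ W = d - ∑ i, w i := by
  have hγ' := (mem_circuitVariety_iff hE hs).mp hγ
  have hq' (i j : Fin d) (hij : i ≠ j) : LinearIndependent ℂ ![q, γ i, γ j] :=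
    (hpair i j hij).finCons (by simpa [Matrix.range_cons, Set.pair_comm] using hq i j)
  have hw' : ∀ i, w i = (M.restrict (p '' Set.Iic i)).degree (p i) := hw
  refine ⟨liftSpace M γ q Set.univ, ?_, ?_⟩
  · ext z
    rw [SetLike.mem_coe, mem_liftSpace_iff_not_linearIndependent hγ']
    simp only [Set.subset_univ, forall_const]
    exact (mem_circuitVariety_iff hE hs (v := fun i => γ i + z i • q)).symm
  · have h := finrank_liftSpace_range_add_sum_degree hs hγ' hq' p hp.injective
      (hE ▸ Set.subset_univ _) fun i => hw' i ▸ hw1 i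
    have hsum : ∑ i, w i = ∑ i, (M.restrict (p '' Set.Iic i)).degree (p i) :=
      Finset.sum_congr rfl fun i _ => hw' i
    rw [hp.surjective.range_eq, ← hsum, Fintype.card_fin] at h
    omega

/-- Let `M` be a nilpotent simple matroid of rank at most 3 on `[d]`,
with an ordering `p_1, …, p_d` of the points such that the degree `w_i` of `p_i` in
`M|{p_1, …, p_i}` is at most 1 for every `i`.  Let `γ ∈ V_{C(M)}` have no loops and no
coinciding points, and let `q ∈ ℂ³` be in general position with respect to `γ`.  Then
`Lift_{M,q}(γ) = {z ∈ ℂ^d : (γ_i + z_i q)_i ∈ V_{C(M)}}` is (the underlying set of) a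
`ℂ`-linear subspace of `ℂ^d` of dimension `d − Σ_i w_i`. -/
theorem lift_space_is_subspace_of_dimension (d : ℕ) (M : PLM (Fin d))
    (hE : M.E = Set.univ)
    (hmat : M.IsMatroid) (hs : M.Simple) (hrk : M.RankLE3) (hnil : M.Nilpotent)
    (p : Fin d → Fin d) (hp : Function.Bijective p)
    (w : Fin d → ℕ)
    (hw : ∀ i : Fin d, w i = (M.restrict {x | ∃ j, j ≤ i ∧ p j = x}).degree (p i))
    (hw1 : ∀ i, w i ≤ 1)
    (γ : Fin d → Fin 3 → ℂ)
    (hγ : (fun pr : Fin d × Fin 3 => γ pr.1 pr.2) ∈ circuitVariety M)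
    (hzero : ∀ i, γ i ≠ 0)
    (hpair : ∀ i j : Fin d, i ≠ j → LinearIndependent ℂ ![γ i, γ j])
    (q : Fin 3 → ℂ)
    (hq : ∀ i j : Fin d, q ∉ Submodule.span ℂ ({γ i, γ j} : Set (Fin 3 → ℂ))) :
    ∃ W : Submodule ℂ (Fin d → ℂ),
      (W : Set (Fin d → ℂ)) =
        {z : Fin d → ℂ |
          (fun pr : Fin d × Fin 3 => γ pr.1 pr.2 + z pr.1 * q pr.2) ∈ circuitVariety M} ∧
      Module.finrank ℂ W = d - ∑ i, w i :=
  lift_space_is_subspace_of_dimension_general d M hE hs p hp w hw hw1 γ hγ hpair q hq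
end

section
/- Every cactus configuration is nilpotent. -/
/-! Cactus configurations (over the ground type `ℕ`, so that free gluings have room
for fresh points). -/

namespace PLM

/-- A line configuration: the uniform matroid `U_{2,m}` on `m ≥ 3` elements. -/
def IsLineConfig (M : PLM ℕ) : Prop :=
  M.E.Finite ∧ 3 ≤ M.E.ncard ∧ ∀ I, M.Indep I ↔ I ⊆ M.E ∧ I.ncard ≤ 2

/-- A cycle: a simple matroid of rank at most 3 whose lines can be cyclically ordered
`l_1, …, l_n` (`n ≥ 3`) with distinct points `p_1, …, p_n` such that `p_i` lies exactly on
`l_i` and `l_{i+1}` (indices mod `n`) and every other point lies on exactly one line. -/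
def IsCycle (M : PLM ℕ) : Prop :=
  M.IsMatroid ∧ M.Simple ∧ M.RankLE3 ∧
  ∃ m : ℕ, ∃ (p : Fin (m + 3) → ℕ) (l : Fin (m + 3) → Set ℕ),
    Function.Injective p ∧ Function.Injective l ∧ (∀ i, p i ∈ M.E) ∧
    (∀ L, M.IsLine L ↔ ∃ i, L = l i) ∧
    (∀ i : Fin (m + 3), {L | M.IsLine L ∧ p i ∈ L} = {l i, l (i + 1)}) ∧
    (∀ x ∈ M.E, (∀ i, x ≠ p i) → ({L | M.IsLine L ∧ x ∈ L}).ncard = 1)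

/-- Replace the point `p` by the point `P` in the set `l` (used to transport lines
through a free gluing). -/
def relabelLine (l : Set ℕ) (p P : ℕ) : Set ℕ :=
  {x | (x ∈ l ∧ x ≠ p) ∨ (x = P ∧ p ∈ l)}

/-- `G` is the free gluing of `M` and `N` at the points `p ∈ M.E` and `q ∈ N.E`,
identified to the new point `P`: the ground set is the disjoint union with `p, q`
identified to `P`, the lines are the (relabelled) lines of `M` and of `N`, and the
dependent 3-sets are exactly the 3-element subsets of these lines. -/
def IsFreeGluing (M N G : PLM ℕ) (p q P : ℕ) : Prop :=
  p ∈ M.E ∧ q ∈ N.E ∧ Disjoint M.E N.E ∧ P ∉ M.E ∧ P ∉ N.E ∧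
  G.E = insert P ((M.E \ {p}) ∪ (N.E \ {q})) ∧
  (∀ I : Set ℕ, G.Indep I ↔ I ⊆ G.E ∧ I.ncard ≤ 3 ∧
    (I.ncard = 3 → ¬ ∃ l' : Set ℕ,
      ((∃ l, M.IsLine l ∧ l' = relabelLine l p P) ∨
        (∃ l, N.IsLine l ∧ l' = relabelLine l q P)) ∧ I ⊆ l'))

/-- A connected cactus configuration: obtained from a line configuration or a cycle by
iteratively freely gluing line configurations or cycles. -/
inductive IsConnectedCactus : PLM ℕ → Prop
  | line (M : PLM ℕ) : IsLineConfig M → IsConnectedCactus M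
  | cycle (M : PLM ℕ) : IsCycle M → IsConnectedCactus M
  | glue (M N G : PLM ℕ) (p q P : ℕ) : IsConnectedCactus M →
      (IsLineConfig N ∨ IsCycle N) → IsFreeGluing M N G p q P → IsConnectedCactus G

/-- Two points are directly connected if they lie on a common circuit. -/
def ConnStep (M : PLM ℕ) (x y : ℕ) : Prop := ∃ C, M.Circuit C ∧ x ∈ C ∧ y ∈ C

/-- The connected component of a point of the ground set. -/
def component (M : PLM ℕ) (x : ℕ) : Set ℕ :=
  {y ∈ M.E | Relation.ReflTransGen (ConnStep M) x y}

/-- A cactus configuration: a simple rank-3 matroid each of whose connected components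
is a connected cactus configuration. -/
def IsCactusConfig (M : PLM ℕ) : Prop :=
  M.IsMatroid ∧ M.Simple ∧ M.RankEq3 ∧
  ∀ x ∈ M.E, IsConnectedCactus (M.restrict (M.component x))

end PLM

/-! Realization spaces for matroids on a ground set `[d] = {0, …, d-1} ⊆ ℕ`,
with configurations in `ℂ^{3d}`. -/

/-- The vector of a configuration attached to the natural number `i < d`. -/
def cvecN (d : ℕ) (γ : Config d) (i : ℕ) : Fin 3 → ℂ :=
  if h : i < d then cvec γ ⟨i, h⟩ else 0

/-- The family of vectors indexed by `S ⊆ ℕ` is linearly dependent. -/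
def LinDepN (d : ℕ) (γ : Config d) (S : Set ℕ) : Prop :=
  ¬ LinearIndependent ℂ (fun i : S => cvecN d γ i)

/-- The realization space `Γ_M ⊆ ℂ^{3d}` of a matroid with ground set `[d] ⊆ ℕ`. -/
def realizationSpaceN (d : ℕ) (M : PLM ℕ) : Set (Config d) :=
  {γ | ∀ S ⊆ M.E, (¬ M.Indep S ↔ LinDepN d γ S)}

/-- The circuit variety `V_{C(M)} ⊆ ℂ^{3d}` of a matroid with ground set `[d] ⊆ ℕ`. -/
def circuitVarietyN (d : ℕ) (M : PLM ℕ) : Set (Config d) :=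
  {γ | ∀ S ⊆ M.E, ¬ M.Indep S → LinDepN d γ S}

/-- The matroid variety `V_M ⊆ ℂ^{3d}`: the zero locus of the vanishing ideal of `Γ_M`. -/
noncomputable def matroidVarietyN (d : ℕ) (M : PLM ℕ) : Set (Config d) :=
  MvPolynomial.zeroLocus ℂ (MvPolynomial.vanishingIdeal ℂ (realizationSpaceN d M))
/-!
Call a point `g` of `X` a leaf of `X` if at most one line through `g` meets `X` in three or more
points, i.e. `g` has degree at most one in the restriction to `X`. In a line configuration or a
cycle every set with at least two points has two leaves, because each line contains at most two
points lying on other lines. This two-leaf property survives free gluing (each side contributes a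
leaf away from the glued point, which is why one leaf would not be enough) and disjoint unions,
so every cactus configuration has it. It passes to the restriction `M|S_M`, and a leaf of the
whole ground set has degree at most one, so every step of the chain removes a point.
-/

namespace PLM

open Set Function

section LineFamilies

variable {α : Type} {E E₁ E₂ S T X : Set α} {L L₁ L₂ : Set (Set α)} {g : α}

structure IsLinearSpace (E : Set α) (L : Set (Set α)) : Prop where
  subset : ∀ l ∈ L, l ⊆ E
  three_le_ncard : ∀ l ∈ L, 3 ≤ l.ncard
  pairwise_inter : L.Pairwise fun l l' => (l ∩ l').Subsingleton

def IsLeaf (L : Set (Set α)) (X : Set α) (g : α) : Prop :=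
  {l ∈ L | g ∈ l ∧ 3 ≤ (l ∩ X).ncard}.Subsingleton

def HasTwoLeaves (E : Set α) (L : Set (Set α)) : Prop :=
  ∀ X ⊆ E, X.Nontrivial → ∃ a ∈ X, ∃ b ∈ X, a ≠ b ∧ IsLeaf L X a ∧ IsLeaf L X b

def restrictLines (L : Set (Set α)) (S : Set α) : Set (Set α) :=
  {m | ∃ l ∈ L, l ∩ S = m ∧ 3 ≤ m.ncard}

lemma ncard_lt_three_of_subsingleton {s : Set α} (hs : s.Subsingleton) : s.ncard < 3 := by
  have := (ncard_le_one hs.finite).mpr fun _ ha _ hb => hs ha hb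
  omega

lemma isLeaf_of_subsingleton_lines (h : {l ∈ L | g ∈ l}.Subsingleton) : IsLeaf L X g :=
  h.anti fun _ hl => ⟨hl.1, hl.2.1⟩

lemma isLeaf_of_subsingleton (hX : X.Subsingleton) : IsLeaf L X g :=
  fun _ hl => absurd hl.2.2 (ncard_lt_three_of_subsingleton (hX.anti inter_subset_right)).not_ge

lemma IsLeaf.of_inter (hL : ∀ l ∈ L, l ⊆ E) (h : IsLeaf L (X ∩ E) g) : IsLeaf L X g :=
  h.anti fun l ⟨hl, hgl, h3⟩ => ⟨hl, hgl, by
    rwa [← inter_assoc, inter_eq_left.mpr (inter_subset_left.trans (hL l hl))]⟩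

lemma IsLeaf.union (h : IsLeaf L₁ X g) (h₂ : ∀ l ∈ L₂, g ∈ l → (l ∩ X).ncard < 3) :
    IsLeaf (L₁ ∪ L₂) X g :=
  h.anti fun l ⟨hl, hgl, h3⟩ =>
    ⟨hl.resolve_right fun hl₂ => (h₂ l hl₂ hgl).not_ge h3, hgl, h3⟩

lemma HasTwoLeaves.exists_isLeaf_notMem (h : HasTwoLeaves E L) (hX : X ⊆ E)
    (hT : (X ∩ T).Subsingleton) (hne : (X \ T).Nonempty) : ∃ g ∈ X \ T, IsLeaf L X g := by
  obtain ⟨x, hx⟩ := hne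
  rcases X.subsingleton_or_nontrivial with hs | hnt
  · exact ⟨x, hx, isLeaf_of_subsingleton hs⟩
  obtain ⟨a, ha, b, hb, hab, hla, hlb⟩ := h X hX hnt
  by_cases haT : a ∈ T
  · exact ⟨b, ⟨hb, fun hbT => hab (hT ⟨ha, haT⟩ ⟨hb, hbT⟩)⟩, hlb⟩
  · exact ⟨a, ⟨ha, haT⟩, hla⟩

lemma HasTwoLeaves.exists_isLeaf (h : HasTwoLeaves E L) (hX : X ⊆ E) (hne : X.Nonempty) :
    ∃ g ∈ X, IsLeaf L X g := by
  simpa using h.exists_isLeaf_notMem hX (T := ∅) (by simp) (by simpa)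

lemma hasTwoLeaves_of_inter_subset_pair
    (h : ∀ l ∈ L, ∃ a b, ∀ l' ∈ L, l' ≠ l → l ∩ l' ⊆ {a, b}) : HasTwoLeaves E L := by
  intro X _ hnt
  set A := {x ∈ X | {l ∈ L | x ∈ l}.Subsingleton}
  have hfat : ∀ l ∈ L, 3 ≤ (l ∩ X).ncard → ∃ x ∈ A, x ∈ l := by
    intro l hl h3
    obtain ⟨a, b, hab⟩ := h l hl
    have hpair : ({a, b} : Set α).ncard < (l ∩ X).ncard :=
      (ncard_insert_le a {b}).trans_lt (by rw [ncard_singleton]; omega)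
    obtain ⟨x, ⟨hxl, hxX⟩, hx⟩ := exists_mem_notMem_of_ncard_lt_ncard hpair
    have honly : ∀ l' ∈ L, x ∈ l' → l' = l := fun l' hl' hxl' =>
      by_contra fun hne => hx (hab l' hl' hne ⟨hxl, hxl'⟩)
    refine ⟨x, ⟨hxX, fun l₁ hl₁ l₂ hl₂ => ?_⟩, hxl⟩
    rw [honly l₁ hl₁.1 hl₁.2, honly l₂ hl₂.1 hl₂.2]
  rcases A.subsingleton_or_nontrivial with hA | ⟨a, ha, b, hb, hab⟩
  · -- all fat lines pass through the same point of `A`, which lies on only one line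
    have hall : ∀ g, IsLeaf L X g := by
      rintro g l₁ ⟨hl₁, -, h₁⟩ l₂ ⟨hl₂, -, h₂⟩
      obtain ⟨x₁, hx₁, hx₁l⟩ := hfat l₁ hl₁ h₁
      obtain ⟨x₂, hx₂, hx₂l⟩ := hfat l₂ hl₂ h₂
      exact hx₁.2 ⟨hl₁, hx₁l⟩ ⟨hl₂, hA hx₂ hx₁ ▸ hx₂l⟩
    obtain ⟨a, ha, b, hb, hab⟩ := hnt
    exact ⟨a, ha, b, hb, hab, hall a, hall b⟩
  · exact ⟨a, ha.1, b, hb.1, hab, isLeaf_of_subsingleton_lines ha.2,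
      isLeaf_of_subsingleton_lines hb.2⟩

lemma IsLinearSpace.restrictLines (h : IsLinearSpace E L) (S : Set α) :
    IsLinearSpace (E ∩ S) (restrictLines L S) where
  subset := by
    rintro _ ⟨l, hl, rfl, -⟩
    exact inter_subset_inter_left _ (h.subset l hl)
  three_le_ncard := by
    rintro _ ⟨l, -, rfl, h3⟩
    exact h3
  pairwise_inter := by
    rintro _ ⟨l, hl, rfl, -⟩ _ ⟨l', hl', rfl, -⟩ hne
    exact (h.pairwise_inter hl hl' fun hll' => hne (hll' ▸ rfl)).anti
      (inter_subset_inter inter_subset_left inter_subset_left)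

lemma IsLeaf.restrictLines (h : IsLeaf L X g) (hX : X ⊆ S) :
    IsLeaf (restrictLines L S) X g := by
  have hSX : ∀ l : Set α, l ∩ S ∩ X = l ∩ X := fun l => by
    rw [inter_assoc, inter_eq_right.mpr hX]
  rintro _ ⟨⟨l₁, hl₁, rfl, -⟩, hg₁, h₁⟩ _ ⟨⟨l₂, hl₂, rfl, -⟩, hg₂, h₂⟩
  rw [hSX] at h₁ h₂
  rw [h ⟨hl₁, hg₁.1, h₁⟩ ⟨hl₂, hg₂.1, h₂⟩]

lemma HasTwoLeaves.restrictLines (h : HasTwoLeaves E L) (S : Set α) :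
    HasTwoLeaves (E ∩ S) (restrictLines L S) := by
  intro X hX hnt
  obtain ⟨a, ha, b, hb, hab, hla, hlb⟩ := h X (hX.trans inter_subset_left) hnt
  have hXS : X ⊆ S := hX.trans inter_subset_right
  exact ⟨a, ha, b, hb, hab, hla.restrictLines hXS, hlb.restrictLines hXS⟩

section Image

variable {β : Type} {f : α → β}

lemma IsLinearSpace.image (h : IsLinearSpace E L) (hf : InjOn f E) :
    IsLinearSpace (f '' E) (image f '' L) where
  subset := by
    rintro _ ⟨l, hl, rfl⟩
    exact image_mono (h.subset l hl)
  three_le_ncard := by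
    rintro _ ⟨l, hl, rfl⟩
    rw [(hf.mono (h.subset l hl)).ncard_image]
    exact h.three_le_ncard l hl
  pairwise_inter := by
    rintro _ ⟨l, hl, rfl⟩ _ ⟨l', hl', rfl⟩ hne
    rw [← hf.image_inter (h.subset l hl) (h.subset l' hl')]
    exact (h.pairwise_inter hl hl' fun hll' => hne (hll' ▸ rfl)).image f

lemma IsLeaf.image (hf : InjOn f E) (hL : ∀ l ∈ L, l ⊆ E) {X : Set β} (hg : g ∈ E)
    (h : IsLeaf L (f ⁻¹' X) g) : IsLeaf (image f '' L) X (f g) := by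
  have hfat : ∀ l ∈ L, f g ∈ f '' l → 3 ≤ (f '' l ∩ X).ncard →
      l ∈ {l ∈ L | g ∈ l ∧ 3 ≤ (l ∩ f ⁻¹' X).ncard} := fun l hl hgl h3 => by
    rw [← image_inter_preimage, (hf.mono (inter_subset_left.trans (hL l hl))).ncard_image] at h3
    exact ⟨hl, (hf.mem_image_iff (hL l hl) hg).mp hgl, h3⟩
  rintro _ ⟨⟨l₁, hl₁, rfl⟩, hg₁, h₁⟩ _ ⟨⟨l₂, hl₂, rfl⟩, hg₂, h₂⟩
  rw [h (hfat l₁ hl₁ hg₁ h₁) (hfat l₂ hl₂ hg₂ h₂)]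

lemma HasTwoLeaves.image (h : HasTwoLeaves E L) (hf : InjOn f E) (hL : ∀ l ∈ L, l ⊆ E) :
    HasTwoLeaves (f '' E) (image f '' L) := by
  intro X hX hnt
  have hY : f '' (f ⁻¹' X ∩ E) = X := by
    rw [inter_comm, image_inter_preimage, inter_eq_right.mpr hX]
  obtain ⟨a, ha, b, hb, hab, hla, hlb⟩ :=
    h _ inter_subset_right (nontrivial_of_image f _ (hY ▸ hnt))
  exact ⟨f a, ha.1, f b, hb.1, fun e => hab (hf ha.2 hb.2 e),
    (hla.of_inter hL).image hf hL ha.2, (hlb.of_inter hL).image hf hL hb.2⟩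

end Image

lemma IsLinearSpace.union (h₁ : IsLinearSpace E₁ L₁) (h₂ : IsLinearSpace E₂ L₂)
    (hE : (E₁ ∩ E₂).Subsingleton) : IsLinearSpace (E₁ ∪ E₂) (L₁ ∪ L₂) where
  subset := by
    rintro l (hl | hl)
    exacts [(h₁.subset l hl).trans subset_union_left, (h₂.subset l hl).trans subset_union_right]
  three_le_ncard := by
    rintro l (hl | hl)
    exacts [h₁.three_le_ncard l hl, h₂.three_le_ncard l hl]
  pairwise_inter := by
    refine pairwise_union.mpr ⟨h₁.pairwise_inter, h₂.pairwise_inter, fun l hl l' hl' _ => ?_⟩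
    have hsub := inter_subset_inter (h₁.subset l hl) (h₂.subset l' hl')
    exact ⟨hE.anti hsub, inter_comm l l' ▸ hE.anti hsub⟩

lemma exists_two_isLeaf_union_of_subset (h₁ : HasTwoLeaves E₁ L₁) (hL₂ : ∀ l ∈ L₂, l ⊆ E₂)
    (hE : (E₁ ∩ E₂).Subsingleton) (hX : X ⊆ E₁) (hnt : X.Nontrivial) :
    ∃ a ∈ X, ∃ b ∈ X, a ≠ b ∧ IsLeaf (L₁ ∪ L₂) X a ∧ IsLeaf (L₁ ∪ L₂) X b := by
  have hthin : ∀ l ∈ L₂, ∀ g ∈ l, (l ∩ X).ncard < 3 := fun l hl _ _ =>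
    ncard_lt_three_of_subsingleton (hE.anti fun _ hx => ⟨hX hx.2, hL₂ l hl hx.1⟩)
  obtain ⟨a, ha, b, hb, hab, hla, hlb⟩ := h₁ X hX hnt
  exact ⟨a, ha, b, hb, hab, hla.union fun l hl => hthin l hl a, hlb.union fun l hl => hthin l hl b⟩

lemma isLeaf_union_of_notMem (hL₁ : ∀ l ∈ L₁, l ⊆ E₁) (hL₂ : ∀ l ∈ L₂, l ⊆ E₂) (hg : g ∉ E₂)
    (h : IsLeaf L₁ (X ∩ E₁) g) : IsLeaf (L₁ ∪ L₂) X g :=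
  (h.of_inter hL₁).union fun l hl hgl => absurd (hL₂ l hl hgl) hg

lemma HasTwoLeaves.union (h₁ : HasTwoLeaves E₁ L₁) (h₂ : HasTwoLeaves E₂ L₂)
    (hL₁ : ∀ l ∈ L₁, l ⊆ E₁) (hL₂ : ∀ l ∈ L₂, l ⊆ E₂) (hE : (E₁ ∩ E₂).Subsingleton) :
    HasTwoLeaves (E₁ ∪ E₂) (L₁ ∪ L₂) := by
  intro X hX hnt
  by_cases hX₁ : X ⊆ E₁
  · exact exists_two_isLeaf_union_of_subset h₁ hL₂ hE hX₁ hnt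
  by_cases hX₂ : X ⊆ E₂
  · rw [union_comm L₁]
    exact exists_two_isLeaf_union_of_subset h₂ hL₁ (inter_comm E₁ E₂ ▸ hE) hX₂ hnt
  obtain ⟨y₁, hy₁, hy₁E₂⟩ := not_subset.mp hX₂
  obtain ⟨y₂, hy₂, hy₂E₁⟩ := not_subset.mp hX₁
  obtain ⟨g₁, ⟨hg₁, hg₁E₂⟩, hl₁⟩ := h₁.exists_isLeaf_notMem inter_subset_right
    (hE.anti fun _ hx => ⟨hx.1.2, hx.2⟩) ⟨y₁, ⟨hy₁, (hX hy₁).resolve_right hy₁E₂⟩, hy₁E₂⟩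
  obtain ⟨g₂, ⟨hg₂, hg₂E₁⟩, hl₂⟩ := h₂.exists_isLeaf_notMem inter_subset_right
    (hE.anti fun _ hx => ⟨hx.2, hx.1.2⟩) ⟨y₂, ⟨hy₂, (hX hy₂).resolve_left hy₂E₁⟩, hy₂E₁⟩
  refine ⟨g₁, hg₁.1, g₂, hg₂.1, ne_of_mem_of_not_mem hg₁.2 hg₂E₁,
    isLeaf_union_of_notMem hL₁ hL₂ hg₁E₂ hl₁, ?_⟩
  rw [union_comm]
  exact isLeaf_union_of_notMem hL₂ hL₁ hg₂E₁ hl₂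

end LineFamilies

section BUnion

variable {α ι : Type} {s : Set ι} {E : ι → Set α} {L : ι → Set (Set α)}

lemma IsLinearSpace.biUnion (hs : s.PairwiseDisjoint E) (h : ∀ i ∈ s, IsLinearSpace (E i) (L i)) :
    IsLinearSpace (⋃ i ∈ s, E i) (⋃ i ∈ s, L i) where
  subset l hl := by
    obtain ⟨i, hi, hl⟩ := mem_iUnion₂.mp hl
    exact ((h i hi).subset l hl).trans (subset_biUnion_of_mem hi)
  three_le_ncard l hl := by
    obtain ⟨i, hi, hl⟩ := mem_iUnion₂.mp hl
    exact (h i hi).three_le_ncard l hl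
  pairwise_inter l hl l' hl' hne := by
    obtain ⟨i, hi, hl⟩ := mem_iUnion₂.mp hl
    obtain ⟨j, hj, hl'⟩ := mem_iUnion₂.mp hl'
    by_cases hij : i = j
    · subst hij
      exact (h i hi).pairwise_inter hl hl' hne
    · rw [((hs hi hj hij).mono ((h i hi).subset l hl) ((h j hj).subset l' hl')).inter_eq]
      exact subsingleton_empty

lemma HasTwoLeaves.biUnion (hs : s.PairwiseDisjoint E) (hL : ∀ i ∈ s, ∀ l ∈ L i, l ⊆ E i)
    (h : ∀ i ∈ s, HasTwoLeaves (E i) (L i)) : HasTwoLeaves (⋃ i ∈ s, E i) (⋃ i ∈ s, L i) := by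
  have hlift : ∀ i ∈ s, ∀ g ∈ E i, ∀ X, IsLeaf (L i) (X ∩ E i) g →
      IsLeaf (⋃ i ∈ s, L i) X g := by
    intro i hi g hg X hleaf
    refine (hleaf.of_inter (hL i hi)).anti ?_
    rintro l ⟨hl, hgl, h3⟩
    obtain ⟨j, hj, hlj⟩ := mem_iUnion₂.mp hl
    obtain rfl : i = j := hs.elim hi hj (not_disjoint_iff.mpr ⟨g, hg, hL j hj l hlj hgl⟩)
    exact ⟨hlj, hgl, h3⟩
  intro X hX hnt
  obtain ⟨x, hx⟩ := hnt.nonempty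
  obtain ⟨i, hi, hxi⟩ := mem_iUnion₂.mp (hX hx)
  by_cases hXi : X ⊆ E i
  · obtain ⟨a, ha, b, hb, hab, hla, hlb⟩ := h i hi X hXi hnt
    rw [← inter_eq_left.mpr hXi] at hla hlb
    exact ⟨a, ha, b, hb, hab, hlift i hi a (hXi ha) X hla, hlift i hi b (hXi hb) X hlb⟩
  obtain ⟨y, hy, hyi⟩ := not_subset.mp hXi
  obtain ⟨j, hj, hyj⟩ := mem_iUnion₂.mp (hX hy)
  obtain ⟨a, ha, hla⟩ := (h i hi).exists_isLeaf inter_subset_right ⟨x, hx, hxi⟩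
  obtain ⟨b, hb, hlb⟩ := (h j hj).exists_isLeaf inter_subset_right ⟨y, hy, hyj⟩
  have hij : i ≠ j := by
    rintro rfl
    exact hyi hyj
  exact ⟨a, ha.1, b, hb.1, (hs hi hj hij).ne_of_mem ha.2 hb.2, hlift i hi a ha.2 X hla,
    hlift j hj b hb.2 X hlb⟩

end BUnion

section LinearMatroid

variable {α : Type} {M : PLM α} {L : Set (Set α)} {I l m : Set α} {a b g : α}

def lines (M : PLM α) : Set (Set α) := {l | M.IsLine l}

/-- `M` is the simple rank-`≤ 3` matroid whose dependent triples are the collinear triples of the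
linear space `(M.E, L)`. -/
structure IsLinearMatroid (M : PLM α) (L : Set (Set α)) : Prop where
  finite : M.E.Finite
  isLinearSpace : IsLinearSpace M.E L
  indep_iff : ∀ I, M.Indep I ↔ I ⊆ M.E ∧ I.ncard ≤ 3 ∧ (I.ncard = 3 → ¬∃ l ∈ L, I ⊆ l)

namespace IsLinearMatroid

lemma exists_mem_of_not_indep (h : M.IsLinearMatroid L) (hI : I ⊆ M.E) (h3 : I.ncard = 3)
    (hd : ¬M.Indep I) : ∃ l ∈ L, I ⊆ l := by
  by_contra hno
  exact hd ((h.indep_iff I).mpr ⟨hI, h3.le, fun _ => hno⟩)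

lemma linePre (h : M.IsLinearMatroid L) (hl : l ∈ L) : M.LinePre l := by
  refine ⟨h.isLinearSpace.subset l hl, fun hi => ?_,
    fun t ht h3 hi => ((h.indep_iff t).mp hi).2.2 h3 ⟨l, hl, ht⟩⟩
  obtain ⟨-, hle, hno⟩ := (h.indep_iff l).mp hi
  exact hno (hle.antisymm (h.isLinearSpace.three_le_ncard l hl)) ⟨l, hl, subset_rfl⟩

lemma subset_of_linePre (h : M.IsLinearMatroid L) (hm : m ∈ L) (hab : a ≠ b) (ham : a ∈ m)
    (hbm : b ∈ m) (hl : M.LinePre l) (hal : a ∈ l) (hbl : b ∈ l) : l ⊆ m := by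
  intro x hxl
  by_contra hxm
  have hxa : a ≠ x := by
    rintro rfl
    exact hxm ham
  have hxb : b ≠ x := by
    rintro rfl
    exact hxm hbm
  have ht : ({a, b, x} : Set α) ⊆ l := by simp [insert_subset_iff, hal, hbl, hxl]
  have h3 : ({a, b, x} : Set α).ncard = 3 := ncard_eq_three.mpr ⟨a, b, x, hab, hxa, hxb, rfl⟩
  obtain ⟨m', hm', htm'⟩ := h.exists_mem_of_not_indep (ht.trans hl.1) h3 (hl.2.2 _ ht h3)
  have hne : m ≠ m' := by
    rintro rfl
    exact hxm (htm' (by simp))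
  exact hab (h.isLinearSpace.pairwise_inter hm hm' hne ⟨ham, htm' (by simp)⟩
    ⟨hbm, htm' (by simp)⟩)

lemma isLine_iff (h : M.IsLinearMatroid L) : M.IsLine l ↔ l ∈ L := by
  constructor
  · rintro ⟨hl, hmax⟩
    have h3 : 3 ≤ l.ncard := by
      by_contra hlt
      exact hl.2.1 ((h.indep_iff l).mpr ⟨hl.1, by omega, by omega⟩)
    obtain ⟨t, htl, ht3⟩ := exists_subset_card_eq h3
    obtain ⟨m, hm, htm⟩ := h.exists_mem_of_not_indep (htl.trans hl.1) ht3 (hl.2.2 t htl ht3)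
    obtain ⟨a, b, c, hab, -, -, rfl⟩ := ncard_eq_three.mp ht3
    have hlm := h.subset_of_linePre hm hab (htm (by simp)) (htm (by simp)) hl (htl (by simp))
      (htl (by simp))
    rwa [← hmax m (h.linePre hm) hlm]
  · intro hl
    have h3 := h.isLinearSpace.three_le_ncard l hl
    obtain ⟨a, ha, b, hb, hab⟩ :=
      (one_lt_ncard (h.finite.subset (h.isLinearSpace.subset l hl))).mp (by omega)
    exact ⟨h.linePre hl, fun l' hl' hll' =>
      (h.subset_of_linePre hl hab ha hb hl' (hll' ha) (hll' hb)).antisymm hll'⟩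

lemma lines_eq (h : M.IsLinearMatroid L) : M.lines = L :=
  ext fun _ => h.isLine_iff

lemma degree_le_one_of_isLeaf (h : M.IsLinearMatroid L) (hg : IsLeaf L M.E g) :
    M.degree g ≤ 1 := by
  have hsub : {l | M.IsLine l ∧ g ∈ l} ⊆ {l ∈ L | g ∈ l ∧ 3 ≤ (l ∩ M.E).ncard} := by
    rintro l ⟨hl, hgl⟩
    rw [h.isLine_iff] at hl
    refine ⟨hl, hgl, ?_⟩
    rw [inter_eq_left.mpr (h.isLinearSpace.subset l hl)]
    exact h.isLinearSpace.three_le_ncard l hl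
  have hs := hg.anti hsub
  exact (ncard_le_one hs.finite).mpr fun _ hx _ hy => hs hx hy

lemma restrict (h : M.IsLinearMatroid L) (S : Set α) :
    (M.restrict S).IsLinearMatroid (restrictLines L S) where
  finite := h.finite.inter_of_left S
  isLinearSpace := h.isLinearSpace.restrictLines S
  indep_iff I := by
    change M.Indep I ∧ I ⊆ S ↔ I ⊆ M.E ∩ S ∧ _
    rw [h.indep_iff, subset_inter_iff]
    constructor
    · rintro ⟨⟨hIE, h3, hno⟩, hIS⟩
      exact ⟨⟨hIE, hIS⟩, h3, fun hc ⟨_, ⟨l, hl, hlm, _⟩, hIl⟩ =>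
        hno hc ⟨l, hl, hIl.trans (hlm ▸ inter_subset_left)⟩⟩
    · rintro ⟨⟨hIE, hIS⟩, h3, hno⟩
      refine ⟨⟨hIE, h3, fun hc ⟨l, hl, hIl⟩ => hno hc ⟨l ∩ S, ⟨l, hl, rfl, ?_⟩,
        subset_inter hIl hIS⟩⟩, hIS⟩
      exact hc ▸ ncard_le_ncard (subset_inter hIl hIS)
        ((h.finite.subset (h.isLinearSpace.subset l hl)).inter_of_left S)

theorem nilpotent (h : M.IsLinearMatroid L) (hL : HasTwoLeaves M.E L) : M.Nilpotent := by
  induction hn : M.E.ncard using Nat.strong_induction_on generalizing M L with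
  | _ n ih =>
  obtain hE | hne := M.E.eq_empty_or_nonempty
  · exact ⟨0, hE⟩
  obtain ⟨g, hg, hleaf⟩ := hL.exists_isLeaf subset_rfl hne
  have hgS : g ∉ M.Sstep.E := fun hgS => by
    have := h.degree_le_one_of_isLeaf hleaf
    have := hgS.2.2
    omega
  have hlt : M.Sstep.E.ncard < n :=
    hn ▸ ncard_lt_ncard ⟨inter_subset_left, fun hs => hgS (hs hg)⟩ h.finite
  obtain ⟨k, hk⟩ := ih _ hlt (h.restrict _) (hL.restrictLines _) rfl
  exact ⟨k + 1, hk⟩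

end IsLinearMatroid

lemma three_le_ncard_of_isLine (hs : M.Simple) (hl : M.IsLine l) : 3 ≤ l.ncard := by
  by_contra h
  exact hl.1.2.1 (hs l hl.1.1 (by omega))

lemma exists_isLine_superset (hfin : M.E.Finite) (hl : M.LinePre l) :
    ∃ l', M.IsLine l' ∧ l ⊆ l' := by
  obtain ⟨l', ⟨hl', hll'⟩, hmax⟩ := Finite.exists_maximalFor id {l' | M.LinePre l' ∧ l ⊆ l'}
    (hfin.finite_subsets.subset fun _ h => h.1.1) ⟨l, hl, subset_rfl⟩
  exact ⟨l', ⟨hl', fun l'' hl'' h => (hmax ⟨hl'', hll'.trans h⟩ h).antisymm h⟩, hll'⟩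

lemma isLinearMatroid_lines_of_simple (hm : M.IsMatroid) (hs : M.Simple) (hr : M.RankLE3)
    (hp : M.lines.Pairwise fun l l' => (l ∩ l').Subsingleton) : M.IsLinearMatroid M.lines where
  finite := hm.1
  isLinearSpace := ⟨fun _ hl => hl.1.1, fun _ hl => three_le_ncard_of_isLine hs hl, hp⟩
  indep_iff I := by
    refine ⟨fun hI => ⟨hm.2.2.1 I hI, hr I hI, fun h3 ⟨l, hl, hIl⟩ => hl.1.2.2 I hIl h3 hI⟩,
      fun ⟨hIE, hle, hno⟩ => ?_⟩
    by_cases h3 : I.ncard = 3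
    · by_contra hd
      have hI : M.LinePre I := ⟨hIE, hd, fun t ht ht3 => by
        rwa [eq_of_subset_of_ncard_le ht (by omega) (hm.1.subset hIE)]⟩
      exact hno h3 (exists_isLine_superset hm.1 hI)
    · exact hs I hIE (by omega)

end LinearMatroid

section LineConfigsAndCycles

variable {N : PLM ℕ}

lemma IsLineConfig.isLinearMatroid (h : N.IsLineConfig) : N.IsLinearMatroid {N.E} where
  finite := h.1
  isLinearSpace := ⟨fun _ hl => hl.le, fun _ hl => hl ▸ h.2.1, pairwise_singleton _ _⟩
  indep_iff I := by
    rw [h.2.2]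
    simp only [mem_singleton_iff, exists_eq_left]
    constructor
    · rintro ⟨hIE, h2⟩
      exact ⟨hIE, by omega, fun h3 _ => by omega⟩
    · rintro ⟨hIE, h3, hno⟩
      exact ⟨hIE, by by_contra; exact hno (by omega) hIE⟩

lemma IsLineConfig.isLinearMatroid_lines_and_hasTwoLeaves (h : N.IsLineConfig) :
    N.IsLinearMatroid N.lines ∧ HasTwoLeaves N.E N.lines := by
  rw [h.isLinearMatroid.lines_eq]
  exact ⟨h.isLinearMatroid, hasTwoLeaves_of_inter_subset_pair fun l hl =>
    ⟨0, 0, fun l' hl' hne => absurd (hl'.trans hl.symm) hne⟩⟩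

lemma add_one_add_one_ne {n : ℕ} (k : Fin (n + 3)) : k + 1 + 1 ≠ k := by
  rw [add_assoc, Ne, add_eq_left, Fin.ext_iff, Fin.val_add]
  simp [Nat.mod_eq_of_lt (show 2 < n + 3 by omega)]

variable {n : ℕ} {p : Fin (n + 3) → ℕ} {l : Fin (n + 3) → Set ℕ}

lemma exists_eq_of_mem_inter_of_isCycle (hlinj : Injective l)
    (hlines : ∀ L, N.IsLine L ↔ ∃ i, L = l i)
    (hpt : ∀ i, {L | N.IsLine L ∧ p i ∈ L} = {l i, l (i + 1)})
    (hother : ∀ x ∈ N.E, (∀ i, x ≠ p i) → {L | N.IsLine L ∧ x ∈ L}.ncard = 1)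
    {i j : Fin (n + 3)} (hij : i ≠ j) {x : ℕ} (hx : x ∈ l i ∩ l j) :
    ∃ k, x = p k ∧ (i = k ∧ j = k + 1 ∨ i = k + 1 ∧ j = k) := by
  obtain ⟨hxi, hxj⟩ := hx
  by_cases hxp : ∃ k, x = p k
  · obtain ⟨k, rfl⟩ := hxp
    have hp : ∀ i, p k ∈ l i → i = k ∨ i = k + 1 := by
      intro i hki
      have : l i ∈ ({l k, l (k + 1)} : Set (Set ℕ)) := hpt k ▸ ⟨(hlines _).mpr ⟨i, rfl⟩, hki⟩
      rcases this with h | h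
      exacts [Or.inl (hlinj h), Or.inr (hlinj h)]
    refine ⟨k, rfl, ?_⟩
    rcases hp i hxi with hi | hi <;> rcases hp j hxj with hj | hj
    · exact absurd (hi.trans hj.symm) hij
    · exact Or.inl ⟨hi, hj⟩
    · exact Or.inr ⟨hi, hj⟩
    · exact absurd (hi.trans hj.symm) hij
  · obtain ⟨L₀, hL₀⟩ := ncard_eq_one.mp
      (hother x (((hlines _).mpr ⟨i, rfl⟩).1.1 hxi) fun k hk => hxp ⟨k, hk⟩)
    have hi : l i ∈ {L | N.IsLine L ∧ x ∈ L} := ⟨(hlines _).mpr ⟨i, rfl⟩, hxi⟩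
    have hj : l j ∈ {L | N.IsLine L ∧ x ∈ L} := ⟨(hlines _).mpr ⟨j, rfl⟩, hxj⟩
    rw [hL₀, mem_singleton_iff] at hi hj
    exact absurd (hlinj (hi.trans hj.symm)) hij

lemma pairwise_inter_range_of_consecutive
    (h : ∀ {i j}, i ≠ j → ∀ x ∈ l i ∩ l j,
      ∃ k, x = p k ∧ (i = k ∧ j = k + 1 ∨ i = k + 1 ∧ j = k)) :
    (range l).Pairwise fun l l' => (l ∩ l').Subsingleton := by
  rintro _ ⟨i, rfl⟩ _ ⟨j, rfl⟩ hne x hx y hy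
  have hij : i ≠ j := fun e => hne (e ▸ rfl)
  obtain ⟨k, rfl, hk⟩ := h hij x hx
  obtain ⟨k', rfl, hk'⟩ := h hij y hy
  rcases hk with ⟨hik, hjk⟩ | ⟨hik, hjk⟩ <;> rcases hk' with ⟨hik', hjk'⟩ | ⟨hik', hjk'⟩
  · rw [← hik, ← hik']
  · exact absurd (by rw [← hjk, hjk', ← hik', hik]) (add_one_add_one_ne k)
  · exact absurd (by rw [← hjk', hjk, ← hik, hik']) (add_one_add_one_ne k')
  · rw [← hjk, ← hjk']

lemma IsCycle.isLinearMatroid_lines_and_hasTwoLeaves (h : N.IsCycle) :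
    N.IsLinearMatroid N.lines ∧ HasTwoLeaves N.E N.lines := by
  obtain ⟨hmat, hsimp, hrank, n, p, l, -, hlinj, -, hlines, hpt, hother⟩ := h
  have hL : N.lines = range l := ext fun L => (hlines L).trans (by simp [eq_comm])
  have hcross := fun {i j} (hij : i ≠ j) x (hx : x ∈ l i ∩ l j) =>
    exists_eq_of_mem_inter_of_isCycle hlinj hlines hpt hother hij hx
  refine ⟨isLinearMatroid_lines_of_simple hmat hsimp hrank
    (hL ▸ pairwise_inter_range_of_consecutive hcross), hL ▸ ?_⟩
  refine hasTwoLeaves_of_inter_subset_pair ?_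
  rintro _ ⟨i, rfl⟩
  refine ⟨p i, p (i - 1), ?_⟩
  rintro _ ⟨j, rfl⟩ hne x hx
  obtain ⟨k, rfl, hk⟩ := hcross (fun e : i = j => hne (e ▸ rfl)) x hx
  rcases hk with ⟨rfl, -⟩ | ⟨rfl, -⟩
  · exact Or.inl rfl
  · exact Or.inr (by simp)

end LineConfigsAndCycles

section Cactus

variable {M N G : PLM ℕ} {p q P : ℕ}

lemma relabelLine_eq_image (l : Set ℕ) (p P : ℕ) : relabelLine l p P = update id p P '' l := by
  ext x
  simp only [relabelLine, mem_ofPred_eq, mem_image, update_apply, id]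
  aesop

lemma injOn_update_id {s : Set ℕ} (hP : P ∉ s) : InjOn (update id p P) s := by
  intro x hx y hy hxy
  simp only [update_apply, id] at hxy
  split_ifs at hxy <;> aesop

lemma image_update_id {s : Set ℕ} (hp : p ∈ s) : update id p P '' s = insert P (s \ {p}) := by
  ext x
  simp only [mem_image, update_apply, id, mem_insert_iff, mem_sdiff, mem_singleton_iff]
  aesop

namespace IsFreeGluing

lemma ground_eq (h : IsFreeGluing M N G p q P) :
    G.E = update id p P '' M.E ∪ update id q P '' N.E := by
  rw [h.2.2.2.2.2.1, image_update_id h.1, image_update_id h.2.1, insert_union_distrib]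

lemma inter_subsingleton (h : IsFreeGluing M N G p q P) :
    (update id p P '' M.E ∩ update id q P '' N.E).Subsingleton := by
  rw [image_update_id h.1, image_update_id h.2.1, ← insert_inter_distrib]
  refine (subsingleton_singleton (a := P)).anti ?_
  rintro x (rfl | ⟨⟨hxM, -⟩, hxN, -⟩)
  · rfl
  · exact absurd hxN (h.2.2.1.notMem_of_mem_left hxM)

variable {LM LN : Set (Set ℕ)}

lemma isLinearMatroid (h : IsFreeGluing M N G p q P) (hM : M.IsLinearMatroid LM)
    (hN : N.IsLinearMatroid LN) :
    G.IsLinearMatroid (image (update id p P) '' LM ∪ image (update id q P) '' LN) where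
  finite := h.ground_eq ▸ (hM.finite.image _).union (hN.finite.image _)
  isLinearSpace := h.ground_eq ▸ (hM.isLinearSpace.image (injOn_update_id h.2.2.2.1)).union
    (hN.isLinearSpace.image (injOn_update_id h.2.2.2.2.1)) h.inter_subsingleton
  indep_iff I := by
    have hlines : ∀ l', ((∃ l, M.IsLine l ∧ l' = relabelLine l p P) ∨
        (∃ l, N.IsLine l ∧ l' = relabelLine l q P)) ↔
        l' ∈ image (update id p P) '' LM ∪ image (update id q P) '' LN := fun l' => by
      simp only [relabelLine_eq_image, hM.isLine_iff, hN.isLine_iff, mem_union, mem_image,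
        eq_comm]
    simp only [h.2.2.2.2.2.2 I, hlines]

lemma hasTwoLeaves (h : IsFreeGluing M N G p q P) (hM : M.IsLinearMatroid LM)
    (hN : N.IsLinearMatroid LN) (hLM : HasTwoLeaves M.E LM) (hLN : HasTwoLeaves N.E LN) :
    HasTwoLeaves G.E (image (update id p P) '' LM ∪ image (update id q P) '' LN) := by
  have hM' := hM.isLinearSpace.image (injOn_update_id (p := p) h.2.2.2.1)
  have hN' := hN.isLinearSpace.image (injOn_update_id (p := q) h.2.2.2.2.1)
  exact h.ground_eq ▸ (hLM.image (injOn_update_id h.2.2.2.1) hM.isLinearSpace.subset).union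
    (hLN.image (injOn_update_id h.2.2.2.2.1) hN.isLinearSpace.subset) hM'.subset hN'.subset
    h.inter_subsingleton

end IsFreeGluing

theorem IsConnectedCactus.isLinearMatroid_lines_and_hasTwoLeaves (h : IsConnectedCactus G) :
    G.IsLinearMatroid G.lines ∧ HasTwoLeaves G.E G.lines := by
  have hbase : ∀ N : PLM ℕ, N.IsLineConfig ∨ N.IsCycle →
      N.IsLinearMatroid N.lines ∧ HasTwoLeaves N.E N.lines := fun N hN =>
    hN.elim IsLineConfig.isLinearMatroid_lines_and_hasTwoLeaves
      IsCycle.isLinearMatroid_lines_and_hasTwoLeaves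
  induction h with
  | line N hN => exact hbase N (Or.inl hN)
  | cycle N hN => exact hbase N (Or.inr hN)
  | glue M N G p q P _ hN hG ih =>
    obtain ⟨hM, hLM⟩ := ih
    obtain ⟨hN, hLN⟩ := hbase N hN
    have hG' := hG.isLinearMatroid hM hN
    rw [hG'.lines_eq]
    exact ⟨hG', hG.hasTwoLeaves hM hN hLM hLN⟩

end Cactus

section Components

variable {M : PLM ℕ} {x y : ℕ}

instance (M : PLM ℕ) : Std.Symm M.ConnStep :=
  ⟨fun _ _ ⟨C, hC, hx, hy⟩ => ⟨C, hC, hy, hx⟩⟩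

lemma mem_component_self (hx : x ∈ M.E) : x ∈ M.component x :=
  ⟨hx, .refl⟩

lemma component_eq_of_mem (hy : y ∈ M.component x) : M.component y = M.component x :=
  ext fun _ => ⟨fun hz => ⟨hz.1, hy.2.trans hz.2⟩, fun hz => ⟨hz.1, (symm hy.2).trans hz.2⟩⟩

lemma pairwiseDisjoint_components :
    (M.component '' M.E).PairwiseDisjoint fun c => (M.restrict c).E := by
  rintro _ ⟨x, -, rfl⟩ _ ⟨y, -, rfl⟩ hne
  refine disjoint_left.mpr fun z hzx hzy => hne ?_
  exact (component_eq_of_mem hzx.2).symm.trans (component_eq_of_mem hzy.2)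

lemma biUnion_components : ⋃ c ∈ M.component '' M.E, (M.restrict c).E = M.E := by
  refine (iUnion₂_subset fun _ _ => inter_subset_left).antisymm fun x hx => ?_
  exact mem_biUnion (mem_image_of_mem _ hx) ⟨hx, mem_component_self hx⟩

/-- A dependent triple of a simple matroid is a circuit, hence lies in a single component. -/
lemma indep_iff_of_components (hmat : M.IsMatroid) (hs : M.Simple) (hr : M.RankLE3)
    (hc : ∀ x ∈ M.E, (M.restrict (M.component x)).IsLinearMatroid
      (M.restrict (M.component x)).lines) (I : Set ℕ) :
    M.Indep I ↔ I ⊆ M.E ∧ I.ncard ≤ 3 ∧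
      (I.ncard = 3 → ¬∃ l ∈ ⋃ c ∈ M.component '' M.E, (M.restrict c).lines, I ⊆ l) := by
  simp only [biUnion_image, mem_iUnion₂]
  refine ⟨fun hI => ⟨hmat.2.2.1 I hI, hr I hI, ?_⟩, fun ⟨hIE, hle, hno⟩ => ?_⟩
  · rintro h3 ⟨l, ⟨x, -, hl⟩, hIl⟩
    exact hl.1.2.2 I hIl h3 ⟨hI, hIl.trans (hl.1.1.trans inter_subset_right)⟩
  by_cases h3 : I.ncard = 3
  · by_contra hd
    obtain ⟨x, hx⟩ := nonempty_of_ncard_ne_zero (s := I) (by omega)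
    have hcirc : M.Circuit I := ⟨hIE, hd, fun C hC => hs C (hC.subset.trans hIE)
      (by have := ncard_lt_ncard hC (hmat.1.subset hIE); omega)⟩
    have hIx : I ⊆ (M.restrict (M.component x)).E := fun y hy =>
      ⟨hIE hy, hIE hy, .single ⟨I, hcirc, hx, hy⟩⟩
    obtain ⟨l, hl, hIl⟩ := (hc x (hIE hx)).exists_mem_of_not_indep hIx h3 fun hi => hd hi.1
    exact hno h3 ⟨l, ⟨x, hIE hx, hl⟩, hIl⟩
  · exact hs I hIE (by omega)

theorem IsCactusConfig.exists_isLinearMatroid_hasTwoLeaves (hM : M.IsCactusConfig) :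
    ∃ L, M.IsLinearMatroid L ∧ HasTwoLeaves M.E L := by
  obtain ⟨hmat, hs, ⟨hr, -⟩, hcomp⟩ := hM
  have hc : ∀ c ∈ M.component '' M.E, (M.restrict c).IsLinearMatroid (M.restrict c).lines ∧
      HasTwoLeaves (M.restrict c).E (M.restrict c).lines := by
    rintro _ ⟨x, hx, rfl⟩
    exact (hcomp x hx).isLinearMatroid_lines_and_hasTwoLeaves
  refine ⟨_, ⟨hmat.1, ?_, indep_iff_of_components hmat hs hr fun x hx =>
    (hc _ (mem_image_of_mem _ hx)).1⟩, ?_⟩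
  · have h := IsLinearSpace.biUnion pairwiseDisjoint_components
      fun c hc' => (hc c hc').1.isLinearSpace
    rwa [biUnion_components] at h
  · have h := HasTwoLeaves.biUnion pairwiseDisjoint_components
      (fun c hc' => (hc c hc').1.isLinearSpace.subset) fun c hc' => (hc c hc').2
    rwa [biUnion_components] at h

end Components

end PLM

/-- Every cactus configuration is nilpotent. -/
theorem cactus_is_nilpotent (M : PLM ℕ) (hM : PLM.IsCactusConfig M) :
    M.Nilpotent := by
  obtain ⟨L, hL, hleaves⟩ := hM.exists_isLinearMatroid_hasTwoLeaves
  exact hL.nilpotent hleaves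
end

section
/- Let M be a simple rank-3 matroid on [d] with d ≥ 4, let L ⊂ ℂ³ be a 2-dimensional linear subspace, let γ_1,…,γ_{d−1} be nonzero vectors in L, and let q ∈ ℂ³ \ L. Assume that (γ_1,…,γ_{d−1}) is liftable from q with respect to the restriction M|[d−1], and that the degree of the point d in M is at most 2. Then there exists a nonzero vector γ_d ∈ L such that (γ_1,…,γ_d) is liftable from q with respect to M. -/
/-- The tuple `γ` is liftable from `q` with respect to `M`: there exist scalars `z_i`
such that the lifted tuple `(γ_i + z_i q)_i` lies in the circuit variety of `M` and the
lifted vectors attached to the ground set of `M` span `ℂ³` (non-degenerate lifting). -/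
def Liftable {d : ℕ} (M : PLM (Fin d)) (γ : Fin d → Fin 3 → ℂ) (q : Fin 3 → ℂ) : Prop :=
  ∃ z : Fin d → ℂ,
    (fun pr : Fin d × Fin 3 => γ pr.1 pr.2 + z pr.1 * q pr.2) ∈ circuitVariety M ∧
    Submodule.span ℂ ((fun i => fun j => γ i j + z i * q j) '' M.E) = ⊤

/-!
Lift the old points once and for all, `γ' i = γ i + z i • q`. A dependent triple through `last`
lies on one of the at most two lines through `last`, and all triples of old points on such a line
are dependent after lifting, so the lifted old points of each line lie in a plane; call the two
planes `P₁`, `P₂`. Two planes of `ℂ³` meet nontrivially. If `P₁ ⊓ P₂` contains a vector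
`v + μ • q` with `v ∈ L \ {0}`, lifting `last` to it keeps every dependency of `M`. Otherwise `q`
lies on both planes, so the unlifted old points of each line lie on a line `Pₖ ⊓ L` of `L`; then
leaving the old points unlifted (all of them lie in the proper subspace `L`) and lifting `last`
to `γ b + q`, for an old point `b` with `γ b ≠ 0`, works.
-/

open Submodule Module

section LinearAlgebra

variable {K V ι : Type*} [Field K] [AddCommGroup V] [Module K V]

theorem LinearIndepOn.finrank_span_image_eq_ncard {w : ι → V} {S : Set ι}
    (hS : LinearIndepOn K w S) (hfin : S.Finite) :
    finrank K (span K (w '' S)) = S.ncard := by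
  have := hfin.fintype
  rw [Set.image_eq_range, finrank_span_eq_card hS, Set.ncard_eq_toFinset_card',
    Set.toFinset_card]

theorem finrank_span_singleton_le_one (v : V) : finrank K (span K {v}) ≤ 1 :=
  (finrank_span_le_card _).trans (by simp)

theorem Submodule.exists_mem_notMem_span_singleton {P : Submodule K V} {q : V} (hP : P ≠ ⊥)
    (hq : q ∉ P) : ∃ w ∈ P, w ∉ span K {q} := by
  obtain ⟨w, hwP, hw0⟩ := P.ne_bot_iff.mp hP
  refine ⟨w, hwP, fun hw => hq ?_⟩
  obtain ⟨c, rfl⟩ := mem_span_singleton.mp hw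
  exact (smul_mem_iff P (left_ne_zero_of_smul hw0)).mp hwP

variable [FiniteDimensional K V]

theorem not_linearIndepOn_of_finrank_lt {w : ι → V} {S : Set ι} (W : Submodule K V)
    (hfin : S.Finite) (hW : ∀ i ∈ S, w i ∈ W) (hlt : finrank K W < S.ncard) :
    ¬ LinearIndepOn K w S := fun hS => by
  have hle : span K (w '' S) ≤ W := span_le.mpr (Set.image_subset_iff.mpr hW)
  have := finrank_mono hle
  rw [hS.finrank_span_image_eq_ncard hfin] at this
  omega

theorem not_linearIndepOn_update [DecidableEq ι] {f : ι → V} {a : ι} {w : V} {S : Set ι}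
    (W : Submodule K V) (hfin : S.Finite) (hf : ∀ i ∈ S, i ≠ a → f i ∈ W) (hw : w ∈ W)
    (hlt : finrank K W < S.ncard) : ¬ LinearIndepOn K (Function.update f a w) S := by
  refine not_linearIndepOn_of_finrank_lt W hfin (fun i hi => ?_) hlt
  by_cases hia : i = a
  · subst hia
    simpa using hw
  · simpa [hia] using hf i hi hia

theorem finrank_span_image_le_two {w : ι → V} {T : Set ι}
    (hT : ∀ t ⊆ T, t.ncard = 3 → ¬ LinearIndepOn K w t) :
    finrank K (span K (w '' T)) ≤ 2 := by
  obtain ⟨b, hbT, -, hTb, hb⟩ :=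
    exists_linearIndepOn_extension (linearIndepOn_empty K w) (Set.empty_subset T)
  have hfin : b.Finite := @Set.toFinite _ _ (LinearIndependent.finite hb)
  by_contra! h3
  have hb3 : 3 ≤ b.ncard := by
    rw [← hb.finrank_span_image_eq_ncard hfin]
    exact h3.trans_le (finrank_mono (span_le.mpr hTb))
  obtain ⟨t, htb, ht⟩ := Set.exists_subset_card_eq hb3
  exact hT t (htb.trans hbT) ht (hb.mono htb)

theorem Submodule.exists_le_finrank_eq (W : Submodule K V) {n : ℕ} (hWn : finrank K W ≤ n)
    (hn : n ≤ finrank K V) : ∃ P : Submodule K V, W ≤ P ∧ finrank K P = n := by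
  induction n, hWn using Nat.le_induction with
  | base => exact ⟨W, le_rfl, rfl⟩
  | succ n _ ih =>
    obtain ⟨P, hWP, hP⟩ := ih (by omega)
    obtain ⟨v, hv⟩ : ∃ v, v ∉ P := by
      by_contra! h
      have : P = ⊤ := eq_top_iff.mpr fun v _ => h v
      rw [this, finrank_top] at hP
      omega
    exact ⟨P ⊔ span K {v}, hWP.trans le_sup_left, by rw [finrank_sup_span_singleton hv, hP]⟩

theorem Submodule.inf_ne_bot_of_finrank_lt_add {P Q : Submodule K V}
    (h : finrank K V < finrank K P + finrank K Q) : P ⊓ Q ≠ ⊥ := fun hPQ =>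
  (finrank_add_finrank_le_of_disjoint (disjoint_iff.mpr hPQ)).not_gt h

end LinearAlgebra

theorem Set.exists_subset_pair_of_ncard_le_two {β : Type*} [Nonempty β] {s : Set β}
    (hs : s.Finite) (h : s.ncard ≤ 2) : ∃ a b, s ⊆ {a, b} := by
  obtain h0 | h1 | h2 : s.ncard = 0 ∨ s.ncard = 1 ∨ s.ncard = 2 := by omega
  · rw [Set.ncard_eq_zero hs] at h0
    exact ⟨Classical.arbitrary β, Classical.arbitrary β, h0 ▸ Set.empty_subset _⟩
  · obtain ⟨a, rfl⟩ := Set.ncard_eq_one.mp h1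
    exact ⟨a, a, by simp⟩
  · obtain ⟨a, b, -, rfl⟩ := Set.ncard_eq_two.mp h2
    exact ⟨a, b, subset_rfl⟩

namespace PLM

variable {α : Type} {M : PLM α}

theorem three_le_ncard_of_not_indep (hs : M.Simple) {S : Set α} (hSE : S ⊆ M.E)
    (hS : ¬ M.Indep S) : 3 ≤ S.ncard := by
  by_contra! h
  exact hS (hs S hSE (by omega))

theorem exists_isLine_superset_s7 [Finite α] {T : Set α} (hTE : T ⊆ M.E) (hT : ¬ M.Indep T)
    (hT3 : T.ncard = 3) : ∃ l, M.IsLine l ∧ T ⊆ l := by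
  have hpre : M.LinePre T := ⟨hTE, hT, fun t ht ht3 =>
    Set.eq_of_subset_of_ncard_le ht (hT3.trans ht3.symm).le ▸ hT⟩
  obtain ⟨l, ⟨hl, hTl⟩, hmax⟩ :=
    Set.Finite.exists_maximalFor id {l | M.LinePre l ∧ T ⊆ l} (Set.toFinite _) ⟨T, hpre, subset_rfl⟩
  exact ⟨l, ⟨hl, fun l' hl' hll' => (hmax ⟨hl', hTl.trans hll'⟩ hll').antisymm hll'⟩, hTl⟩

theorem exists_planes_of_degree_le_two {K V : Type*} [Finite α] [Field K] [AddCommGroup V]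
    [Module K V] [FiniteDimensional K V] (hV : 2 ≤ finrank K V) {a : α} {u : α → V}
    (hdep : ∀ S ⊆ M.E, a ∉ S → ¬ M.Indep S → ¬ LinearIndepOn K u S) (hdeg : M.degree a ≤ 2) :
    ∃ P₁ P₂ : Submodule K V, finrank K P₁ = 2 ∧ finrank K P₂ = 2 ∧
      ∀ S ⊆ M.E, ¬ M.Indep S → S.ncard = 3 → a ∈ S →
        ∃ P ∈ ({P₁, P₂} : Set (Submodule K V)), ∀ i ∈ S, i ≠ a → u i ∈ P := by
  have hplane : ∀ l, ∃ P : Submodule K V, finrank K P = 2 ∧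
      (M.IsLine l → ∀ i ∈ l, i ≠ a → u i ∈ P) := by
    intro l
    by_cases hl : M.IsLine l
    · have hrk : finrank K (span K (u '' (l \ {a}))) ≤ 2 :=
        finrank_span_image_le_two fun t ht ht3 =>
          hdep t (ht.trans (Set.sdiff_subset.trans hl.1.1)) (fun hat => (ht hat).2 rfl)
            (hl.1.2.2 t (ht.trans Set.sdiff_subset) ht3)
      obtain ⟨P, hle, hP⟩ := (span K (u '' (l \ {a}))).exists_le_finrank_eq hrk hV
      exact ⟨P, hP, fun _ i hi hia => hle (subset_span ⟨i, ⟨hi, hia⟩, rfl⟩)⟩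
    · obtain ⟨P, -, hP⟩ := (⊥ : Submodule K V).exists_le_finrank_eq (by simp) hV
      exact ⟨P, hP, fun h => absurd h hl⟩
  choose P hP hlP using hplane
  obtain ⟨l₁, l₂, hl₁₂⟩ := Set.exists_subset_pair_of_ncard_le_two (Set.toFinite _) hdeg
  refine ⟨P l₁, P l₂, hP l₁, hP l₂, fun S hSE hS hS3 haS => ?_⟩
  obtain ⟨l, hl, hSl⟩ := exists_isLine_superset_s7 hSE hS hS3
  refine ⟨P l, ?_, fun i hi hia => hlP l hl i (hSl hi) hia⟩
  rcases hl₁₂ ⟨hl, hSl haS⟩ with rfl | rfl <;> simp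

end PLM

section Lifting

variable {d : ℕ} {M : PLM (Fin d)} {γ : Fin d → Fin 3 → ℂ} {q : Fin 3 → ℂ}

theorem liftable_iff : Liftable M γ q ↔ ∃ z : Fin d → ℂ,
    (∀ S ⊆ M.E, ¬ M.Indep S → ¬ LinearIndepOn ℂ (fun i => γ i + z i • q) S) ∧
      span ℂ ((fun i => γ i + z i • q) '' M.E) = ⊤ :=
  Iff.rfl

theorem Liftable.exists_of_restrict {a : Fin d} (hE : M.E = Set.univ)
    (h : Liftable (M.restrict {x | x ≠ a}) γ q) : ∃ z : Fin d → ℂ,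
      (∀ S ⊆ M.E, a ∉ S → ¬ M.Indep S → ¬ LinearIndepOn ℂ (fun i => γ i + z i • q) S) ∧
        span ℂ ((fun i => γ i + z i • q) '' {x | x ≠ a}) = ⊤ := by
  obtain ⟨z, hdep, hspan⟩ := liftable_iff.mp h
  have hE' : (M.restrict {x | x ≠ a}).E = {x | x ≠ a} := by simp [PLM.restrict, hE]
  refine ⟨z, fun S _ haS hS => hdep S ?_ fun h => hS h.1, hE' ▸ hspan⟩
  rw [hE']
  exact fun i hi => ne_of_mem_of_not_mem hi haS

theorem exists_ne_zero_of_span_eq_top {a : Fin d} {z : Fin d → ℂ}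
    (hspan : span ℂ ((fun i => γ i + z i • q) '' {x | x ≠ a}) = ⊤) : ∃ b, b ≠ a ∧ γ b ≠ 0 := by
  by_contra! h
  have hle : span ℂ ((fun i => γ i + z i • q) '' {x | x ≠ a}) ≤ span ℂ {q} := by
    rw [span_le]
    rintro _ ⟨i, hi, rfl⟩
    simpa [h i hi] using smul_mem _ (z i) (mem_span_singleton_self q)
  have := (finrank_mono hle).trans (finrank_span_singleton_le_one q)
  rw [hspan, finrank_top, Module.finrank_fin_fun] at this
  omega

theorem liftable_of_forall_ncard_eq_three (hs : M.Simple) (z : Fin d → ℂ)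
    (htriple : ∀ S ⊆ M.E, ¬ M.Indep S → S.ncard = 3 →
      ¬ LinearIndepOn ℂ (fun i => γ i + z i • q) S)
    (hspan : span ℂ ((fun i => γ i + z i • q) '' M.E) = ⊤) : Liftable M γ q := by
  refine liftable_iff.mpr ⟨z, fun S hSE hS => ?_, hspan⟩
  obtain h3 | h4 := (M.three_le_ncard_of_not_indep hs hSE hS).eq_or_lt
  · exact htriple S hSE hS h3.symm
  · exact not_linearIndepOn_of_finrank_lt ⊤ (Set.toFinite S) (fun _ _ => mem_top)
      (by simpa using h4)

theorem update_add_update_smul (z : Fin d → ℂ) (a : Fin d) (v : Fin 3 → ℂ) (μ : ℂ) :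
    (fun i => Function.update γ a v i + Function.update z a μ i • q) =
      Function.update (fun i => γ i + z i • q) a (v + μ • q) :=
  funext fun i => Function.apply_update₂ (fun _ x c => x + c • q) γ z a v μ i

end Lifting

section Extension

open Function

variable {d : ℕ} {M : PLM (Fin d)} {γ : Fin d → Fin 3 → ℂ} {q : Fin 3 → ℂ} {a : Fin d}
  {L : Submodule ℂ (Fin 3 → ℂ)} {z : Fin d → ℂ} {Ps : Set (Submodule ℂ (Fin 3 → ℂ))}

theorem exists_liftable_update_of_mem_planes (hE : M.E = Set.univ) (hs : M.Simple)
    (hmemL : ∀ i, i ≠ a → γ i ∈ L)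
    (hdep : ∀ S ⊆ M.E, a ∉ S → ¬ M.Indep S → ¬ LinearIndepOn ℂ (fun i => γ i + z i • q) S)
    (hspan : span ℂ ((fun i => γ i + z i • q) '' {x | x ≠ a}) = ⊤)
    (hPs : ∀ P ∈ Ps, finrank ℂ P ≤ 2)
    (hlines : ∀ S ⊆ M.E, ¬ M.Indep S → S.ncard = 3 → a ∈ S →
      ∃ P ∈ Ps, ∀ i ∈ S, i ≠ a → γ i + z i • q ∈ P)
    {w : Fin 3 → ℂ} (hw : ∀ P ∈ Ps, w ∈ P) (hwq : w ∉ span ℂ {q}) :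
    ∃ v : Fin 3 → ℂ, v ∈ L ∧ v ≠ 0 ∧ Liftable M (update γ a v) q := by
  have hLq : L ⊔ span ℂ {q} = ⊤ := by
    rw [eq_top_iff, ← hspan, span_le]
    rintro _ ⟨i, hi, rfl⟩
    exact add_mem (mem_sup_left (hmemL i hi))
      (mem_sup_right (smul_mem _ _ (mem_span_singleton_self q)))
  obtain ⟨v, hvL, _, hμ, rfl⟩ := mem_sup.mp (hLq.ge (mem_top (x := w)))
  obtain ⟨μ, rfl⟩ := mem_span_singleton.mp hμ
  refine ⟨v, hvL, fun hv => hwq (by simpa [hv] using smul_mem _ μ (mem_span_singleton_self q)), ?_⟩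
  refine liftable_of_forall_ncard_eq_three hs (update z a μ) (fun S hSE hS hS3 => ?_) ?_ <;>
    rw [update_add_update_smul]
  · by_cases haS : a ∈ S
    · obtain ⟨P, hP, hSP⟩ := hlines S hSE hS hS3 haS
      exact not_linearIndepOn_update P (Set.toFinite S) hSP (hw P hP) (by linarith [hPs P hP])
    · exact fun h => hdep S hSE haS hS
        (h.congr fun i hi => update_of_ne (ne_of_mem_of_not_mem hi haS) _ _)
  · rw [hE, eq_top_iff, ← hspan]
    refine span_mono ?_
    rintro _ ⟨i, hi, rfl⟩
    exact ⟨i, trivial, update_of_ne hi _ _⟩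

theorem exists_liftable_update_of_q_mem_planes (hE : M.E = Set.univ) (hs : M.Simple)
    (hmemL : ∀ i, i ≠ a → γ i ∈ L) (hq : q ∉ L)
    (hspan : span ℂ ((fun i => γ i + z i • q) '' {x | x ≠ a}) = ⊤)
    (hPs : ∀ P ∈ Ps, finrank ℂ P ≤ 2)
    (hlines : ∀ S ⊆ M.E, ¬ M.Indep S → S.ncard = 3 → a ∈ S →
      ∃ P ∈ Ps, ∀ i ∈ S, i ≠ a → γ i + z i • q ∈ P)
    (hqP : ∀ P ∈ Ps, q ∈ P) :
    ∃ v : Fin 3 → ℂ, v ∈ L ∧ v ≠ 0 ∧ Liftable M (update γ a v) q := by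
  obtain ⟨b, hba, hb⟩ := exists_ne_zero_of_span_eq_top hspan
  refine ⟨γ b, hmemL b hba, hb, liftable_of_forall_ncard_eq_three hs (update 0 a 1) ?_ ?_⟩ <;>
    simp only [update_add_update_smul, Pi.zero_apply, zero_smul, add_zero, one_smul]
  · intro S hSE hS hS3
    by_cases haS : a ∈ S
    · obtain ⟨P, hP, hSP⟩ := hlines S hSE hS hS3 haS
      have hγP : ∀ i ∈ S, i ≠ a → γ i ∈ P ⊓ L := fun i hi hia =>
        ⟨by simpa using sub_mem (hSP i hi hia) (smul_mem P (z i) (hqP P hP)), hmemL i hia⟩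
      have hPL : finrank ℂ ↥(P ⊓ L) < finrank ℂ P :=
        finrank_lt_finrank_of_lt (inf_lt_left.mpr fun hPL => hq (hPL (hqP P hP)))
      refine not_linearIndepOn_update _ (Set.toFinite S)
        (fun i hi hia => mem_sup_left (hγP i hi hia))
        (mem_sup_right (mem_span_singleton_self (γ b + q))) ?_
      have := finrank_add_le_finrank_add_finrank (P ⊓ L) (span ℂ {γ b + q})
      linarith [finrank_span_singleton_le_one (K := ℂ) (γ b + q), hPs P hP]
    · refine not_linearIndepOn_of_finrank_lt L (Set.toFinite S) (fun i hi => ?_) ?_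
      · rw [update_of_ne (ne_of_mem_of_not_mem hi haS)]
        exact hmemL i (ne_of_mem_of_not_mem hi haS)
      · have := finrank_lt (fun hL : L = ⊤ => hq (hL ▸ mem_top))
        simpa [hS3] using this
  · rw [hE]
    set N := span ℂ (update γ a (γ b + q) '' Set.univ)
    have hγN : ∀ i, i ≠ a → γ i ∈ N := fun i hi =>
      subset_span ⟨i, trivial, update_of_ne hi _ _⟩
    have hlastN : γ b + q ∈ N := subset_span ⟨a, trivial, update_self a _ γ⟩
    have hqN : q ∈ N := by simpa using sub_mem hlastN (hγN b hba)
    rw [eq_top_iff, ← hspan, span_le]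
    rintro _ ⟨i, hi, rfl⟩
    exact add_mem (hγN i hi) (smul_mem N _ hqN)

end Extension

theorem liftable_extension_low_degree_general (d : ℕ) (M : PLM (Fin d))
    (hE : M.E = Set.univ) (hs : M.Simple)
    (last : Fin d)
    (L : Submodule ℂ (Fin 3 → ℂ))
    (γ : Fin d → Fin 3 → ℂ)
    (hmemL : ∀ i : Fin d, i ≠ last → γ i ∈ L)
    (q : Fin 3 → ℂ) (hq : q ∉ L)
    (hlift : Liftable (M.restrict {x | x ≠ last}) γ q)
    (hdeg : M.degree last ≤ 2) :
    ∃ v : Fin 3 → ℂ, v ∈ L ∧ v ≠ 0 ∧ Liftable M (Function.update γ last v) q := by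
  obtain ⟨z, hdep, hspan⟩ := hlift.exists_of_restrict hE
  obtain ⟨P₁, P₂, hP₁, hP₂, hlines⟩ := PLM.exists_planes_of_degree_le_two (by simp) hdep hdeg
  have hPs : ∀ P ∈ ({P₁, P₂} : Set (Submodule ℂ (Fin 3 → ℂ))), finrank ℂ P ≤ 2 := by
    rintro _ (rfl | rfl) <;> omega
  by_cases hqP : q ∈ P₁ ⊓ P₂
  · refine exists_liftable_update_of_q_mem_planes hE hs hmemL hq hspan hPs hlines ?_
    rintro _ (rfl | rfl)
    exacts [hqP.1, hqP.2]
  · obtain ⟨w, hw, hwq⟩ := exists_mem_notMem_span_singleton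
      (inf_ne_bot_of_finrank_lt_add (by simp [hP₁, hP₂])) hqP
    refine exists_liftable_update_of_mem_planes hE hs hmemL hdep hspan hPs hlines ?_ hwq
    rintro _ (rfl | rfl)
    exacts [hw.1, hw.2]

/-- Let `M` be a simple rank-3 matroid on `[d]`, `d ≥ 4`, let `L ⊂ ℂ³` be
a 2-dimensional subspace, let `γ_1, …, γ_{d-1}` be nonzero vectors in `L`, and let
`q ∈ ℂ³ \ L`.  Assume `(γ_1, …, γ_{d-1})` is liftable from `q` with respect to `M|[d-1]`
and that the point `d` has degree at most 2 in `M`.  Then there is a nonzero `γ_d ∈ L`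
making `(γ_1, …, γ_d)` liftable from `q` with respect to `M`. -/
theorem liftable_extension_low_degree (d : ℕ) (hd : 4 ≤ d) (M : PLM (Fin d))
    (hE : M.E = Set.univ) (hmat : M.IsMatroid) (hs : M.Simple) (hrk : M.RankEq3)
    (last : Fin d) (hlast : (last : ℕ) = d - 1)
    (L : Submodule ℂ (Fin 3 → ℂ)) (hL : Module.finrank ℂ L = 2)
    (γ : Fin d → Fin 3 → ℂ)
    (hmemL : ∀ i : Fin d, i ≠ last → γ i ∈ L)
    (hnz : ∀ i : Fin d, i ≠ last → γ i ≠ 0)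
    (q : Fin 3 → ℂ) (hq : q ∉ L)
    (hlift : Liftable (M.restrict {x | x ≠ last}) γ q)
    (hdeg : M.degree last ≤ 2) :
    ∃ v : Fin 3 → ℂ, v ∈ L ∧ v ≠ 0 ∧ Liftable M (Function.update γ last v) q :=
  liftable_extension_low_degree_general d M hE hs last L γ hmemL q hq hlift hdeg
end

section
/- Let M be the Pascal configuration on [9]. For every nonzero vector v ∈ ℂ³, the constant tuple γ = (v, v, v, v, v, v, v, v, v), in which all nine vectors coincide, lies in the matroid variety V_M. -/
/-! The Pascal configuration, on the ground set `[9]` identified with `Fin 9`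
(the label `k ∈ {1, …, 9}` corresponds to `(k : Fin 9)`, so `9` corresponds to `0`). -/

/-- The seven dependent triples (lines) of the Pascal configuration. -/
def pascalTriples : Set (Set (Fin 9)) :=
  {{1, 6, 8}, {1, 5, 7}, {2, 4, 7}, {2, 6, 9}, {3, 4, 8}, {3, 5, 9}, {7, 8, 9}}

/-- The Pascal configuration: the simple rank-3 matroid on `[9]` whose dependent
3-sets are exactly the seven triples of `pascalTriples`. -/
def pascal : PLM (Fin 9) :=
  ⟨Set.univ, fun S => S.ncard ≤ 2 ∨ (S.ncard = 3 ∧ S ∉ pascalTriples)⟩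

/-!
Put the nine points in the affine plane with 1, …, 6 on a conic and 7, 8, 9 on their Pascal line,
with no further collinear triples; lifted to vectors `(1, x, y)` they realize the Pascal
configuration, and so do their images under the homothety of ratio `t ≠ 0` followed by a linear
automorphism `g` of `ℂ³` with `g e₀ = v`. These realizations form the line `v + t • w` punctured
at `t = 0`, so a polynomial vanishing on the realization space vanishes on infinitely many points
of that line, hence on all of it, in particular at the constant tuple `v`.
-/

open Function

namespace MvPolynomial

variable {K σ : Type*} [Field K] [Infinite K]

theorem mem_zeroLocus_vanishingIdeal_of_add_smul_mem {S : Set (σ → K)} {x y : σ → K}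
    (h : ∀ t : K, t ≠ 0 → x + t • y ∈ S) : x ∈ zeroLocus K (vanishingIdeal K S) := by
  intro p hp
  set q : Polynomial K :=
    aeval (fun i => Polynomial.C (x i) + Polynomial.X * Polynomial.C (y i)) p
  have hq : ∀ t, q.eval t = aeval (x + t • y) p := by
    intro t
    rw [← Polynomial.coe_aeval_eq_eval, comp_aeval_apply]
    congr 2
    funext i
    simp [mul_comm _ t]
  have hq0 : q = 0 := Polynomial.eq_zero_of_infinite_isRoot q <|
    (Set.finite_singleton 0).infinite_compl.mono fun t ht => by
      simpa [hq] using hp _ (h t ht)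
  simpa [hq] using congrArg (Polynomial.eval 0) hq0

end MvPolynomial

theorem exists_linearEquiv_apply_eq {K V : Type*} [Field K] [AddCommGroup V] [Module K V]
    {x y : V} (hx : x ≠ 0) (hy : y ≠ 0) : ∃ g : V ≃ₗ[K] V, g x = y := by
  obtain ⟨g, hg⟩ := Submodule.exists_linearEquiv_restrict_eq
    ((LinearEquiv.toSpanNonzeroSingleton K V x hx).symm ≪≫ₗ
      LinearEquiv.toSpanNonzeroSingleton K V y hy)
  refine ⟨g, ?_⟩
  have := hg ⟨x, Submodule.mem_span_singleton_self x⟩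
  rwa [LinearEquiv.trans_apply, LinearEquiv.coord_self, LinearEquiv.toSpanNonzeroSingleton_one,
    eq_comm] at this

theorem LinearIndepOn.ncard_le_finrank {K V ι : Type*} [Field K] [AddCommGroup V] [Module K V]
    [FiniteDimensional K V] {v : ι → V} {s : Set ι} (hs : LinearIndepOn K v s) :
    s.ncard ≤ Module.finrank K V := by
  have h := hs.linearIndependent.cardinalMk_le_finrank
  rw [← Nat.card_coe_set_eq, Nat.card]
  simpa using Cardinal.toNat_le_toNat h (Cardinal.natCast_lt_aleph0)

theorem linearIndepOn_triple_iff_det_ne_zero {K ι : Type*} [Field K] {v : ι → Fin 3 → K}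
    {i j k : ι} (hij : i ≠ j) (hik : i ≠ k) (hjk : j ≠ k) :
    LinearIndepOn K v {i, j, k} ↔ (Matrix.of ![v i, v j, v k]).det ≠ 0 := by
  have hinj : Injective ![i, j, k] := by
    intro a b hab
    fin_cases a <;> fin_cases b <;> simp_all [eq_comm]
  have hrange : ({i, j, k} : Set ι) = Set.range ![i, j, k] := by
    ext; simp [eq_comm, or_comm, or_left_comm]
  rw [hrange, linearIndepOn_range_iff hinj, ← isUnit_iff_ne_zero, ← Matrix.isUnit_iff_isUnit_det,
    ← Matrix.linearIndependent_rows_iff_isUnit]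
  rw [show v ∘ ![i, j, k] = ![v i, v j, v k] by ext m; fin_cases m <;> rfl]
  rfl

theorem uncurry_comp_mem_realizationSpace {d : ℕ} {M : PLM (Fin d)} {x : Fin d → Fin 3 → ℂ}
    (hx : uncurry x ∈ realizationSpace M) {f : (Fin 3 → ℂ) →ₗ[ℂ] Fin 3 → ℂ} (hf : Injective f) :
    uncurry (f ∘ x) ∈ realizationSpace M := fun S hS =>
  (hx S hS).trans (not_congr (f.linearIndepOn_iff_of_injOn hf.injOn).symm)

def triplesMatroid {d : ℕ} (L : Set (Set (Fin d))) : PLM (Fin d) :=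
  ⟨Set.univ, fun S => S.ncard ≤ 2 ∨ (S.ncard = 3 ∧ S ∉ L)⟩

theorem uncurry_mem_realizationSpace_triplesMatroid {d : ℕ} (hd : 2 ≤ d)
    {L : Set (Set (Fin d))} {x : Fin d → Fin 3 → ℂ}
    (htriple : ∀ i j k, i ≠ j → i ≠ k → j ≠ k →
      (LinearIndepOn ℂ x {i, j, k} ↔ {i, j, k} ∉ L))
    (hpair : ∀ i j, i ≠ j → ∃ k, LinearIndepOn ℂ x {i, j, k}) :
    uncurry x ∈ realizationSpace (triplesMatroid L) := by
  intro S _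
  refine not_congr (show S.ncard ≤ 2 ∨ (S.ncard = 3 ∧ S ∉ L) ↔ LinearIndepOn ℂ x S from ?_)
  obtain hS | hS | hS := lt_trichotomy S.ncard 3
  · obtain ⟨T, hST, -, hT⟩ := Set.exists_subsuperset_card_eq (Set.subset_univ S)
      (show S.ncard ≤ 2 by omega) (by simpa using hd)
    obtain ⟨i, j, hij, rfl⟩ := Set.ncard_eq_two.mp hT
    obtain ⟨k, hk⟩ := hpair i j hij
    exact iff_of_true (Or.inl (by omega)) (hk.mono (hST.trans (Set.insert_subset_insert (by simp))))
  · obtain ⟨i, j, k, hij, hik, hjk, rfl⟩ := Set.ncard_eq_three.mp hS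
    simp [hS, htriple i j k hij hik hjk]
  · refine iff_of_false (by omega) fun hx => ?_
    have := hx.ncard_le_finrank
    rw [Module.finrank_fin_fun] at this
    omega

/- Labels 1–6 lie on the parabola `15 y = x²`, and 7, 8, 9 are the meeting points of opposite
sides of the inscribed hexagon 1 6 2 4 3 5, collinear by Pascal's theorem. -/
def pascalX : Fin 9 → ℤ := ![0, 0, 15, 30, 60, 120, 240, -20, -12]

def pascalY : Fin 9 → ℤ := ![-240, 0, 15, 60, 240, 960, 3840, -160, -192]

def pascalArea (i j k : Fin 9) : ℤ :=
  (pascalX j - pascalX i) * (pascalY k - pascalY i) -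
    (pascalX k - pascalX i) * (pascalY j - pascalY i)

set_option synthInstance.maxSize 256 in
theorem mem_pascalTriples_iff_pascalArea_eq_zero :
    ∀ i j k : Fin 9, i ≠ j → i ≠ k → j ≠ k →
      (({i, j, k} : Set (Fin 9)) ∈ pascalTriples ↔ pascalArea i j k = 0) := by
  intro i j k
  simp only [pascalTriples, Set.mem_insert_iff, Set.mem_singleton_iff, Set.ext_iff]
  revert i j k
  decide

theorem exists_pascalArea_ne_zero : ∀ i j : Fin 9, i ≠ j → ∃ k, pascalArea i j k ≠ 0 := by
  decide

def pascalConfig (t : ℂ) (i : Fin 9) : Fin 3 → ℂ := ![1, t * pascalX i, t * pascalY i]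

theorem pascalConfig_eq_single_add_smul (t : ℂ) (i : Fin 9) :
    pascalConfig t i = Pi.single 0 1 + t • ![0, (pascalX i : ℂ), pascalY i] := by
  ext m
  fin_cases m <;> simp [pascalConfig]

theorem det_pascalConfig (t : ℂ) (i j k : Fin 9) :
    (Matrix.of ![pascalConfig t i, pascalConfig t j, pascalConfig t k]).det =
      t ^ 2 * pascalArea i j k := by
  rw [Matrix.det_fin_three]
  simp only [pascalConfig, pascalArea, Matrix.of_apply, Matrix.cons_val', Matrix.cons_val_zero,
    Matrix.cons_val_one, Matrix.cons_val, Matrix.cons_val_fin_one, Int.cast_sub, Int.cast_mul]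
  ring

theorem pascalConfig_mem_realizationSpace {t : ℂ} (ht : t ≠ 0) :
    uncurry (pascalConfig t) ∈ realizationSpace pascal := by
  have htriple : ∀ i j k, i ≠ j → i ≠ k → j ≠ k →
      (LinearIndepOn ℂ (pascalConfig t) {i, j, k} ↔ {i, j, k} ∉ pascalTriples) := by
    intro i j k hij hik hjk
    rw [linearIndepOn_triple_iff_det_ne_zero hij hik hjk, det_pascalConfig,
      mem_pascalTriples_iff_pascalArea_eq_zero i j k hij hik hjk]
    simp [ht]
  rw [show pascal = triplesMatroid pascalTriples from rfl]
  refine uncurry_mem_realizationSpace_triplesMatroid (by norm_num) htriple fun i j hij => ?_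
  obtain ⟨k, hk⟩ := exists_pascalArea_ne_zero i j hij
  have hik : i ≠ k := by rintro rfl; simp [pascalArea] at hk
  have hjk : j ≠ k := by rintro rfl; simp [pascalArea] at hk
  exact ⟨k, (htriple i j k hij hik hjk).mpr fun hmem =>
    hk ((mem_pascalTriples_iff_pascalArea_eq_zero i j k hij hik hjk).mp hmem)⟩

/-- For every nonzero vector `v ∈ ℂ³`, the constant tuple
`(v, v, v, v, v, v, v, v, v)` lies in the matroid variety of the Pascal configuration. -/
theorem pascal_constant_tuple_mem (v : Fin 3 → ℂ) (hv : v ≠ 0) :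
    (fun pr : Fin 9 × Fin 3 => v pr.2) ∈ matroidVariety pascal := by
  obtain ⟨g, hg⟩ := exists_linearEquiv_apply_eq (K := ℂ) (x := Pi.single 0 1) (by simp) hv
  refine MvPolynomial.mem_zeroLocus_vanishingIdeal_of_add_smul_mem
    (y := uncurry fun i => g ![0, (pascalX i : ℂ), pascalY i]) fun t ht => ?_
  convert uncurry_comp_mem_realizationSpace (pascalConfig_mem_realizationSpace ht)
    (f := g.toLinearMap) g.injective using 1
  funext ⟨i, m⟩
  show v m + t * g _ m = g (pascalConfig t i) m
  rw [pascalConfig_eq_single_add_smul, map_add, map_smul, hg]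
  rfl
end
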